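/- arXiv:1708.03566 — 8 statements merged into one kernel-verified Lean document; each statement's English description precedes it below -/
import Mathlib

section
/- Let 1 → Γ' → Γ → Γ'' be an exact sequence of groups (i.e., there is a group homomorphism φ: Γ → Γ'' with kernel Γ'). If Γ' is Jordan and Γ'' has bounded finite subgroups, then Γ is Jordan; moreover, if Γ' is strongly Jordan, then Γ is strongly Jordan. -/
/-- A group is *Jordan* if there is a constant `J` such that every finite subgroup
contains a normal abelian subgroup of index at most `J`. -/
def IsJordanGroup (Γ : Type*) [Group Γ] : Prop :=
  ∃ J : ℕ, ∀ G : Subgroup Γ, Finite G →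
    ∃ A : Subgroup G, A.Normal ∧ (∀ x y : A, x * y = y * x) ∧ A.index ≤ J

/-- A group has *bounded finite subgroups* if there is a constant `B` bounding the
order of all of its finite subgroups. -/
def HasBoundedFiniteSubgroups (Γ : Type*) [Group Γ] : Prop :=
  ∃ B : ℕ, ∀ G : Subgroup Γ, Finite G → Nat.card G ≤ B

/-- A group is *strongly Jordan* if it is Jordan and there is a constant `R` such that
every finite subgroup is generated by at most `R` elements. -/
def IsStronglyJordanGroup (Γ : Type*) [Group Γ] : Prop :=
  IsJordanGroup Γ ∧ ∃ R : ℕ, ∀ G : Subgroup Γ, Finite G →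
    ∃ S : Finset Γ, S.card ≤ R ∧ Subgroup.closure (S : Set Γ) = G

/-- The index of the normal core is at most the factorial of the index. -/
lemma normalCore_index_le {G : Type*} [Group G] [Finite G] (A : Subgroup G) :
    A.normalCore.index ≤ Nat.factorial A.index := by
  rw [Subgroup.normalCore_eq_ker, Subgroup.index_ker]
  have h2 : Nat.card (MulAction.toPermHom G (G ⧸ A)).range ≤ Nat.card (Equiv.Perm (G ⧸ A)) :=
    Nat.card_le_card_of_injective _ Subtype.val_injective
  have h3 : Nat.card (Equiv.Perm (G ⧸ A)) = Nat.factorial A.index := by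
    haveI : DecidableEq (G ⧸ A) := Classical.decEq _
    haveI := Fintype.ofFinite (G ⧸ A)
    rw [Nat.card_eq_fintype_card, Fintype.card_perm, Subgroup.index_eq_card,
      Nat.card_eq_fintype_card]
  omega

/-- Lemma 2.8(i): given an exact sequence 1 → Γ' → Γ → Γ'' of groups, if Γ' is Jordan
(resp. strongly Jordan) and Γ'' has bounded finite subgroups, then Γ is Jordan
(resp. strongly Jordan). -/
theorem stmt_0 {Γ' Γ Γ'' : Type*} [Group Γ'] [Group Γ] [Group Γ'']
    (ι : Γ' →* Γ) (φ : Γ →* Γ'') (hι : Function.Injective ι) (hker : ι.range = φ.ker)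
    (hB : HasBoundedFiniteSubgroups Γ'') :
    (IsJordanGroup Γ' → IsJordanGroup Γ) ∧
    (IsStronglyJordanGroup Γ' → IsStronglyJordanGroup Γ) := by
  classical
  obtain ⟨B, hB⟩ := hB
  -- For every finite subgroup `G` of `Γ`, the kernel `K` of `φ` restricted to `G` has
  -- index at most `B` and embeds into `Γ'` compatibly with `ι`.
  have key : ∀ G : Subgroup Γ, Finite G → ∃ K : Subgroup G,
      K.index ≤ B ∧ ∃ g : K →* Γ', Function.Injective g ∧ ∀ k : K, ι (g k) = ((k : G) : Γ) := by
    intro G hG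
    haveI := hG
    set ψ : G →* Γ'' := φ.comp G.subtype with hψ
    refine ⟨ψ.ker, ?_, ?_⟩
    · rw [Subgroup.index_ker]
      haveI : Finite ψ.range := (Set.finite_range ψ).to_subtype
      exact hB ψ.range inferInstance
    · have hmem : ∀ k : ψ.ker, ((k : G) : Γ) ∈ ι.range := by
        intro k
        rw [hker]
        exact k.2
      let g0 : ψ.ker →* ι.range :=
        { toFun := fun k => ⟨((k : G) : Γ), hmem k⟩
          map_one' := rfl
          map_mul' := fun _ _ => rfl }
      let e : Γ' ≃* ι.range := MonoidHom.ofInjective hι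
      refine ⟨e.symm.toMonoidHom.comp g0, ?_, ?_⟩
      · intro x y hxy
        have h2 := congrArg Subtype.val (e.symm.injective hxy)
        exact Subtype.ext (Subtype.ext h2)
      · intro k
        have : ι (e.symm (g0 k)) = ((e (e.symm (g0 k)) : ι.range) : Γ) :=
          (MonoidHom.ofInjective_apply hι).symm
        rw [MonoidHom.comp_apply]
        simp only [MulEquiv.coe_toMonoidHom]
        rw [this, e.apply_symm_apply]
        rfl
  have jordanPart : IsJordanGroup Γ' → IsJordanGroup Γ := by
    rintro ⟨J, hJ⟩
    refine ⟨Nat.factorial (J * B), fun G hG => ?_⟩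
    haveI := hG
    obtain ⟨K, hKB, g, hginj, hgval⟩ := key G hG
    haveI : Finite g.range := (Set.finite_range g).to_subtype
    obtain ⟨A', hA'norm, hA'ab, hA'idx⟩ := hJ g.range inferInstance
    let e : K ≃* g.range := MonoidHom.ofInjective hginj
    let A_K : Subgroup K := A'.comap e.toMonoidHom
    have hAKidx : A_K.index = A'.index :=
      Subgroup.index_comap_of_surjective _ e.surjective
    let A : Subgroup G := A_K.map K.subtype
    have hAleK : A ≤ K := by
      rintro x ⟨a, _, rfl⟩
      exact a.2
    have hArel : A.relIndex K = A_K.index := by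
      unfold A
      rw [Subgroup.relIndex, Subgroup.subgroupOf,
        Subgroup.comap_map_eq_self_of_injective K.subtype_injective]
    have hAidx : A.index ≤ J * B := by
      rw [← Subgroup.relIndex_mul_index hAleK, hArel, hAKidx]
      exact Nat.mul_le_mul hA'idx hKB
    refine ⟨A.normalCore, Subgroup.normalCore_normal A, ?_, ?_⟩
    · -- abelian
      intro x y
      have hx : (x : G) ∈ A := A.normalCore_le x.2
      have hy : (y : G) ∈ A := A.normalCore_le y.2
      obtain ⟨a, ha, hax⟩ := hx
      obtain ⟨b, hb, hby⟩ := hy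
      have hcomm : a * b = b * a := by
        have := hA'ab ⟨e a, ha⟩ ⟨e b, hb⟩
        have h2 : (e a) * (e b) = (e b) * (e a) := congrArg Subtype.val this
        apply e.injective
        rw [map_mul, map_mul, h2]
      apply Subtype.ext
      calc (x : G) * (y : G) = K.subtype a * K.subtype b := by rw [hax, hby]
        _ = K.subtype (a * b) := (map_mul _ _ _).symm
        _ = K.subtype (b * a) := by rw [hcomm]
        _ = K.subtype b * K.subtype a := map_mul _ _ _
        _ = (y : G) * (x : G) := by rw [hax, hby]
    · calc A.normalCore.index ≤ Nat.factorial A.index := normalCore_index_le A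
        _ ≤ Nat.factorial (J * B) := Nat.factorial_le hAidx
  refine ⟨jordanPart, fun hS => ⟨jordanPart hS.1, ?_⟩⟩
  obtain ⟨R, hR⟩ := hS.2
  refine ⟨R + B, fun G hG => ?_⟩
  haveI := hG
  obtain ⟨K, hKB, g, hginj, hgval⟩ := key G hG
  haveI : Finite g.range := (Set.finite_range g).to_subtype
  obtain ⟨S', hS'card, hS'cl⟩ := hR g.range inferInstance
  haveI : Fintype (G ⧸ K) := Fintype.ofFinite _
  set S : Finset Γ := S'.image ι with hSdef
  set T : Finset Γ := Finset.univ.image (fun q : G ⧸ K => ((q.out : G) : Γ)) with hTdef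
  have hSK : Subgroup.closure (S : Set Γ) = K.map G.subtype := by
    rw [hSdef, Finset.coe_image, ← MonoidHom.map_closure, hS'cl]
    ext x
    constructor
    · rintro ⟨y, ⟨k, rfl⟩, rfl⟩
      exact ⟨k, k.2, (hgval k).symm ▸ hgval k⟩
    · rintro ⟨y, hy, rfl⟩
      exact ⟨g ⟨y, hy⟩, ⟨⟨y, hy⟩, rfl⟩, hgval ⟨y, hy⟩⟩
  refine ⟨S ∪ T, ?_, ?_⟩
  · calc (S ∪ T).card ≤ S.card + T.card := Finset.card_union_le _ _
      _ ≤ R + B := by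
        refine Nat.add_le_add (le_trans (Finset.card_image_le) hS'card) ?_
        calc T.card ≤ Finset.univ.card := Finset.card_image_le
          _ = Fintype.card (G ⧸ K) := rfl
          _ = K.index := by rw [Subgroup.index_eq_card, Nat.card_eq_fintype_card]
          _ ≤ B := hKB
  · apply le_antisymm
    · rw [Subgroup.closure_le]
      intro x hx
      rcases Finset.mem_union.1 hx with h | h
      · have : x ∈ Subgroup.closure (S : Set Γ) := Subgroup.subset_closure h
        rw [hSK] at this
        obtain ⟨k, _, rfl⟩ := this
        exact k.2
      · obtain ⟨q, _, rfl⟩ := Finset.mem_image.1 h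
        exact ((q.out : G)).2
    · intro x hx
      set xg : G := ⟨x, hx⟩ with hxg
      obtain ⟨h, hh⟩ := QuotientGroup.mk_out_eq_mul K xg
      have hx' : x = (((QuotientGroup.mk xg : G ⧸ K).out : G) : Γ) * (((h : G) : Γ))⁻¹ := by
        have : xg = (QuotientGroup.mk xg : G ⧸ K).out * (h : G)⁻¹ := by
          rw [hh, mul_assoc, mul_inv_cancel, mul_one]
        calc x = (xg : Γ) := rfl
          _ = (((QuotientGroup.mk xg : G ⧸ K).out * (h : G)⁻¹ : G) : Γ) := by rw [← this]
          _ = _ := rfl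
      rw [hx']
      refine mul_mem ?_ (inv_mem ?_)
      · apply Subgroup.subset_closure
        exact Finset.mem_union_right _ (Finset.mem_image.2 ⟨_, Finset.mem_univ _, rfl⟩)
      · have : ((h : G) : Γ) ∈ Subgroup.closure (S : Set Γ) := by
          rw [hSK]
          exact ⟨(h : K), h.2, rfl⟩
        exact Subgroup.closure_mono (by simp [Finset.coe_union]) this
end

section
/- Let 1 → Γ' → Γ → Γ'' be an exact sequence of groups (i.e., there is a group homomorphism φ: Γ → Γ'' with kernel Γ'). If Γ' has bounded finite subgroups and Γ'' is strongly Jordan, then Γ is strongly Jordan. -/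
open Subgroup

/-- Generation lemma: if `ψ.range` is generated by `S` and `G` is finite, then `G` is
generated by `S.card + Nat.card ψ.ker` elements. -/
theorem aux_gen_lemma {G Q : Type*} [Group G] [Group Q] [Finite G] (ψ : G →* Q)
    (S : Finset Q) (hS : Subgroup.closure (S : Set Q) = ψ.range) :
    ∃ T : Finset G, T.card ≤ S.card + Nat.card ψ.ker ∧
      Subgroup.closure (T : Set G) = ⊤ := by
  classical
  -- each element of S lies in ψ.range
  have hmem : ∀ s ∈ S, s ∈ ψ.range := by
    intro s hs
    rw [← hS]
    exact Subgroup.subset_closure hs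
  choose lift hlift using fun (s : S) => hmem s s.2
  have : Finite (ψ.ker) := Subgroup.instFiniteSubtypeMem _
  let Kf : Finset G := Set.Finite.toFinset (Set.toFinite (ψ.ker : Set G))
  let Lf : Finset G := Finset.image (fun s : S => lift s) Finset.univ
  refine ⟨Lf ∪ Kf, ?_, ?_⟩
  · have h1 : Lf.card ≤ S.card := by
      calc Lf.card ≤ (Finset.univ : Finset S).card := Finset.card_image_le
        _ = S.card := by simp
    have h2 : Kf.card = Nat.card ψ.ker := by
      rw [← Set.ncard_coe_finset, Set.Finite.coe_toFinset, ← Nat.card_coe_set_eq]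
      rfl
    calc (Lf ∪ Kf).card ≤ Lf.card + Kf.card := Finset.card_union_le _ _
      _ ≤ S.card + Nat.card ψ.ker := by omega
  · rw [eq_top_iff]
    intro g _
    have hrange : ψ g ∈ Subgroup.map ψ (Subgroup.closure (Lf : Set G)) := by
      rw [MonoidHom.map_closure]
      have hsub : (S : Set Q) ⊆ ψ '' (Lf : Set G) := by
        intro s hs
        refine ⟨lift ⟨s, hs⟩, ?_, hlift ⟨s, hs⟩⟩
        simp only [Lf, Finset.coe_image, Finset.coe_univ, Set.image_univ, Set.mem_range]
        exact ⟨⟨s, hs⟩, rfl⟩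
      have : ψ g ∈ Subgroup.closure (S : Set Q) := by
        rw [hS]; exact ⟨g, rfl⟩
      exact Subgroup.closure_mono hsub this
    obtain ⟨w, hw, hwg⟩ := hrange
    have hgw : g * w⁻¹ ∈ ψ.ker := by
      rw [MonoidHom.mem_ker, map_mul, map_inv, hwg, mul_inv_cancel]
    have h1 : g * w⁻¹ ∈ Subgroup.closure ((Lf ∪ Kf : Finset G) : Set G) := by
      apply Subgroup.subset_closure
      simp only [Finset.coe_union, Set.mem_union]
      right
      simp only [Kf, Set.Finite.coe_toFinset, SetLike.mem_coe]
      exact hgw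
    have h2 : w ∈ Subgroup.closure ((Lf ∪ Kf : Finset G) : Set G) := by
      refine Subgroup.closure_mono ?_ hw
      intro x hx
      simp only [Finset.coe_union, Set.mem_union]
      exact Or.inl hx
    have := mul_mem h1 h2
    simpa using this

open Subgroup in

theorem aux_key_lemma {G : Type*} [Group G] [Finite G] (M H : Subgroup G) [M.Normal]
    {B J d : ℕ} (hB1 : 1 ≤ B) (hM : Nat.card M ≤ B) (hH : H.index ≤ J)
    (hcomm : ∀ x ∈ H, ∀ y ∈ H, x * y * x⁻¹ * y⁻¹ ∈ M)
    (hgen : ∃ S : Finset G, S.card ≤ d ∧ Subgroup.closure (S : Set G) = ⊤) :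
    ∃ A : Subgroup G, A.Normal ∧ (∀ x y : A, x * y = y * x) ∧
      A.index ≤ Nat.factorial (B ^ (J * B ^ B * d) * (J * B ^ B)) := by
  classical
  obtain ⟨S, hScard, hStop⟩ := hgen
  set Z := (MulAut.conjNormal (H := M) : G →* MulAut M).ker with hZdef
  -- bound index of Z
  have hMautcard : Nat.card (MulAut ↥M) ≤ B ^ B := by
    have hinj : Function.Injective (fun e : MulAut ↥M => (DFunLike.coe e : ↥M → ↥M)) :=
      fun a b hab => DFunLike.coe_injective hab
    have h1 : Nat.card (MulAut ↥M) ≤ Nat.card (↥M → ↥M) :=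
      Nat.card_le_card_of_injective _ hinj
    have h2 : Nat.card (↥M → ↥M) = Nat.card ↥M ^ Nat.card ↥M := Nat.card_fun
    calc Nat.card (MulAut ↥M) ≤ Nat.card ↥M ^ Nat.card ↥M := by omega
      _ ≤ B ^ Nat.card ↥M := Nat.pow_le_pow_left hM _
      _ ≤ B ^ B := Nat.pow_le_pow_right hB1 hM
  have hZ : Z.index ≤ B ^ B := by
    rw [hZdef, index_ker]
    exact le_trans (Nat.card_le_card_of_injective _ Subtype.val_injective) hMautcard
  -- the subgroup C
  set C := H ⊓ Z with hCdef
  have hC : C.index ≤ J * B ^ B :=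
    le_trans index_inf_le (Nat.mul_le_mul hH hZ)
  -- elements of C centralize M
  have fact1 : ∀ c ∈ C, ∀ m : ↥M, c * (m : G) * c⁻¹ = m := by
    intro c hc m
    have hcZ : c ∈ Z := hc.2
    have h1 : MulAut.conjNormal c = (1 : MulAut ↥M) := hcZ
    have := congrArg (fun e : MulAut ↥M => ((e m : ↥M) : G)) h1
    simpa [MulAut.conjNormal_apply] using this
  -- commutators of elements of C lie in M
  have fact2 : ∀ x ∈ C, ∀ y ∈ C, x * y * x⁻¹ * y⁻¹ ∈ M := by
    intro x hx y hy
    exact hcomm x hx.1 y hy.1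
  -- Schreier generators of C
  haveI : C.FiniteIndex := ⟨C.index_ne_zero_of_finite⟩
  obtain ⟨T, hTcard, hTtop⟩ := Subgroup.exists_finset_card_le_mul C hStop
  have hTcard' : T.card ≤ J * B ^ B * d :=
    le_trans hTcard (Nat.mul_le_mul hC hScard)
  -- for each t : C, the commutator homomorphism C →* M
  have fmul : ∀ t c₁ c₂ : ↥C,
      (t : G) * (c₁ * c₂ : ↥C) * (t : G)⁻¹ * ((c₁ * c₂ : ↥C) : G)⁻¹
        = ((t : G) * c₁ * (t : G)⁻¹ * (c₁ : G)⁻¹) * ((t : G) * c₂ * (t : G)⁻¹ * (c₂ : G)⁻¹) := by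
    intro t c₁ c₂
    have hw : (c₁ : G) * (((t : G) * c₂ * (t : G)⁻¹ * (c₂ : G)⁻¹ : G)) * (c₁ : G)⁻¹
        = (t : G) * c₂ * (t : G)⁻¹ * (c₂ : G)⁻¹ :=
      fact1 c₁ c₁.2 ⟨_, fact2 t t.2 c₂ c₂.2⟩
    calc (t : G) * (c₁ * c₂ : ↥C) * (t : G)⁻¹ * ((c₁ * c₂ : ↥C) : G)⁻¹
        = ((t : G) * c₁ * (t : G)⁻¹ * (c₁ : G)⁻¹) *
            ((c₁ : G) * ((t : G) * c₂ * (t : G)⁻¹ * (c₂ : G)⁻¹) * (c₁ : G)⁻¹) := by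
          push_cast
          group
      _ = _ := by rw [hw]
  let f : ↥C → (↥C →* ↥M) := fun t =>
    { toFun := fun c => ⟨(t : G) * c * (t : G)⁻¹ * (c : G)⁻¹, fact2 t t.2 c c.2⟩
      map_one' := by ext; simp
      map_mul' := by
        intro c₁ c₂
        ext
        exact fmul t c₁ c₂ }
  -- the intersection of the kernels
  have hind : ∀ T' : Finset ↑C, (T'.inf fun t => (f t).ker).index ≤ B ^ T'.card := by
    intro T'
    induction T' using Finset.induction with
    | empty => simp [Subgroup.index_top]
    | @insert a s ha ih =>
      rw [Finset.inf_insert, Finset.card_insert_of_notMem ha, pow_succ, Nat.mul_comm]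
      refine le_trans index_inf_le (Nat.mul_le_mul ?_ ih)
      rw [index_ker]
      exact le_trans (Nat.card_le_card_of_injective _ Subtype.val_injective) hM
  set A_C := T.inf (fun t => (f t).ker) with hACdef
  have hACindex : A_C.index ≤ B ^ T.card := hind T
  -- elements of A_C are central in C
  have habC : ∀ a ∈ A_C, ∀ b : ↥C, a * b = b * a := by
    intro a ha b
    have hTsub : (T : Set ↥C) ⊆ (Subgroup.centralizer {a} : Set ↥C) := by
      intro t ht
      have hat : a ∈ (f t).ker := by
        have := Finset.inf_le ht (f := fun t => (f t).ker)
        exact this ha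
      have h1 : (t : G) * a * (t : G)⁻¹ * (a : G)⁻¹ = 1 := by
        have := congrArg (Subtype.val) hat
        simpa [f] using this
      have h3 : ((t : G) * a) * (((a : G) * t))⁻¹ = 1 := by
        rw [mul_inv_rev, ← mul_assoc]
        exact h1
      have h2 : (a : G) * t = (t : G) * a := (mul_inv_eq_one.mp h3).symm
      rw [SetLike.mem_coe, Subgroup.mem_centralizer_iff]
      intro h hh
      rw [Set.mem_singleton_iff] at hh
      subst hh
      exact Subtype.ext h2
    have : (⊤ : Subgroup ↥C) ≤ Subgroup.centralizer {a} := by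
      rw [← hTtop]
      exact Subgroup.closure_le _ |>.mpr hTsub
    have hb : b ∈ Subgroup.centralizer {a} := this (Subgroup.mem_top b)
    exact hb a rfl
  -- push A_C forward to a subgroup of G
  set A := A_C.map C.subtype with hAdef
  have hAle : A ≤ C := Subgroup.map_subtype_le A_C
  have hAab : ∀ x ∈ A, ∀ y ∈ A, x * y = y * x := by
    intro x hx y hy
    obtain ⟨a, haA, hax⟩ := hx
    obtain ⟨b, hbA, hby⟩ := hy
    have h := congrArg Subtype.val (habC a haA b)
    rw [← hax, ← hby]
    exact h
  have hAindex : A.index ≤ B ^ (J * B ^ B * d) * (J * B ^ B) := by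
    have h1 : A.relIndex C = A_C.index := by
      rw [Subgroup.relIndex]
      congr 1
      rw [hAdef, ← Subgroup.comap_subtype]
      exact comap_map_eq_self_of_injective C.subtype_injective A_C
    have h2 := Subgroup.relIndex_mul_index hAle
    rw [← h2, h1]
    exact Nat.mul_le_mul (le_trans hACindex (Nat.pow_le_pow_right hB1 hTcard')) hC
  refine ⟨A.normalCore, inferInstance, ?_, ?_⟩
  · intro x y
    have hx : (x : G) ∈ A := A.normalCore_le x.2
    have hy : (y : G) ∈ A := A.normalCore_le y.2
    exact Subtype.ext (hAab x hx y hy)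
  · rw [Subgroup.normalCore_eq_ker, index_ker]
    haveI : Fintype (G ⧸ A) := Fintype.ofFinite _
    calc Nat.card (MulAction.toPermHom G (G ⧸ A)).range
        ≤ Nat.card (Equiv.Perm (G ⧸ A)) :=
          Nat.card_le_card_of_injective _ Subtype.val_injective
      _ = (Nat.card (G ⧸ A)).factorial := by
          rw [Nat.card_eq_fintype_card, Fintype.card_perm, Nat.card_eq_fintype_card]
      _ = (A.index).factorial := by rw [← Subgroup.index_eq_card]
      _ ≤ _ := Nat.factorial_le hAindex

/-- Lemma 2.8(ii): given an exact sequence 1 → Γ' → Γ → Γ'' of groups, if Γ' has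
bounded finite subgroups and Γ'' is strongly Jordan, then Γ is strongly Jordan. -/
theorem stmt_1 {Γ' Γ Γ'' : Type*} [Group Γ'] [Group Γ] [Group Γ'']
    (ι : Γ' →* Γ) (φ : Γ →* Γ'') (hι : Function.Injective ι) (hker : ι.range = φ.ker)
    (hB : HasBoundedFiniteSubgroups Γ') (hJ : IsStronglyJordanGroup Γ'') :
    IsStronglyJordanGroup Γ := by
  refine ?_
  obtain ⟨B, hBbound⟩ := hB
  obtain ⟨⟨J, hJbound⟩, R, hRbound⟩ := hJ
  have hB1 : 1 ≤ B := by
    have h := hBbound ⊥ inferInstance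
    simpa using h
  -- the kernel of φ restricted to a finite subgroup has cardinality at most B
  have hker_card : ∀ (G : Subgroup Γ), Finite G → Nat.card ((φ.comp G.subtype).ker) ≤ B := by
    intro G hfin
    haveI := hfin
    set ψ := φ.comp G.subtype with hψdef
    set L := (ψ.ker).map G.subtype with hLdef
    have hLcard : Nat.card ψ.ker = Nat.card L :=
      Nat.card_congr (Subgroup.equivMapOfInjective ψ.ker G.subtype G.subtype_injective).toEquiv
    have hLle : L ≤ ι.range := by
      rw [hker]
      rintro x ⟨g, hg, rfl⟩
      exact hg
    set P := L.comap ι with hPdef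
    have hPmap : P.map ι = L := by
      rw [hPdef, Subgroup.map_comap_eq, inf_of_le_right hLle]
    have hPcard : Nat.card P = Nat.card L := by
      rw [← hPmap]
      exact Nat.card_congr (Subgroup.equivMapOfInjective P ι hι).toEquiv
    have hLfin : Finite L := by
      rw [hLdef]
      exact Finite.of_equiv _ (Subgroup.equivMapOfInjective ψ.ker G.subtype
        G.subtype_injective).toEquiv
    have hPfin : Finite P := by
      have : Finite (P.map ι) := hPmap ▸ hLfin
      exact Finite.of_equiv _ (Subgroup.equivMapOfInjective P ι hι).toEquiv.symm
    calc Nat.card ψ.ker = Nat.card L := hLcard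
      _ = Nat.card P := hPcard.symm
      _ ≤ B := hBbound P hPfin
  constructor
  · -- the Jordan property
    refine ⟨Nat.factorial (B ^ (J * B ^ B * (R + B)) * (J * B ^ B)), ?_⟩
    intro G hfin
    haveI := hfin
    set ψ := φ.comp G.subtype with hψdef
    haveI : Finite ψ.range := Finite.of_surjective ψ.rangeRestrict ψ.rangeRestrict_surjective
    obtain ⟨A'', hA''norm, hA''ab, hA''idx⟩ := hJbound ψ.range inferInstance
    set H := (A''.map ψ.range.subtype).comap ψ with hHdef
    have hHidx : H.index ≤ J := by
      rw [hHdef, Subgroup.index_comap]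
      have h1 : (A''.map ψ.range.subtype).relIndex ψ.range = A''.index := by
        rw [Subgroup.relIndex]
        congr 1
        rw [← Subgroup.comap_subtype]
        exact Subgroup.comap_map_eq_self_of_injective ψ.range.subtype_injective A''
      rw [h1]
      exact hA''idx
    have hHcomm : ∀ x ∈ H, ∀ y ∈ H, x * y * x⁻¹ * y⁻¹ ∈ ψ.ker := by
      intro x hx y hy
      rw [hHdef, Subgroup.mem_comap] at hx hy
      obtain ⟨a, haA, hax⟩ := hx
      obtain ⟨b, hbA, hby⟩ := hy
      rw [MonoidHom.mem_ker]
      simp only [map_mul, map_inv]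
      rw [← hax, ← hby]
      have h := congrArg (fun z : ↥A'' => ((z : ↥ψ.range) : Γ''))
        (hA''ab ⟨a, haA⟩ ⟨b, hbA⟩)
      simp only [Subgroup.coe_mul] at h
      rw [show ((ψ.range.subtype a : Γ'')) = ((a : ↥ψ.range) : Γ'') from rfl,
        show ((ψ.range.subtype b : Γ'')) = ((b : ↥ψ.range) : Γ'') from rfl, h]
      group
    have hMcard : Nat.card ψ.ker ≤ B := hker_card G hfin
    obtain ⟨S'', hS''card, hS''gen⟩ := hRbound ψ.range inferInstance
    obtain ⟨T, hTcard, hTgen⟩ := aux_gen_lemma ψ S'' hS''gen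
    have hgen : ∃ S : Finset ↥G, S.card ≤ R + B ∧ Subgroup.closure (S : Set ↥G) = ⊤ :=
      ⟨T, le_trans hTcard (by omega), hTgen⟩
    exact aux_key_lemma ψ.ker H hB1 hMcard hHidx hHcomm hgen
  · -- the generation property
    classical
    refine ⟨R + B, ?_⟩
    intro G hfin
    haveI := hfin
    set ψ := φ.comp G.subtype with hψdef
    haveI : Finite ψ.range := Finite.of_surjective ψ.rangeRestrict ψ.rangeRestrict_surjective
    obtain ⟨S'', hS''card, hS''gen⟩ := hRbound ψ.range inferInstance
    obtain ⟨T, hTcard, hTgen⟩ := aux_gen_lemma ψ S'' hS''gen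
    have hMcard : Nat.card ↑ψ.ker ≤ B := hker_card G hfin
    refine ⟨T.image G.subtype, ?_, ?_⟩
    · calc (T.image G.subtype).card ≤ T.card := Finset.card_image_le
        _ ≤ S''.card + Nat.card ψ.ker := hTcard
        _ ≤ R + B := by omega
    · rw [Finset.coe_image, ← MonoidHom.map_closure, hTgen, ← MonoidHom.range_eq_map,
        Subgroup.range_subtype]
end

section
/- Let A be an abelian group whose torsion subgroup is isomorphic to (ℚ/ℤ)^n, and let Λ ⊆ A be a subgroup isomorphic to ℤ^m. Then the quotient group Γ = A/Λ is strongly Jordan; more precisely, every finite subgroup of A/Λ is generated by at most n + m elements. -/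
lemma toSubgroup_closure {A : Type*} [AddGroup A] (S : Set A) :
    AddSubgroup.toSubgroup (AddSubgroup.closure S) =
      Subgroup.closure (Multiplicative.ofAdd '' S) := by
  apply le_antisymm
  · rw [← AddSubgroup.toSubgroup.le_symm_apply]
    rw [AddSubgroup.closure_le]
    intro x hx
    have : Multiplicative.ofAdd x ∈ Subgroup.closure (Multiplicative.ofAdd '' S) :=
      Subgroup.subset_closure ⟨x, hx, rfl⟩
    exact this
  · rw [Subgroup.closure_le]
    rintro x ⟨y, hy, rfl⟩
    have : y ∈ AddSubgroup.closure S := AddSubgroup.subset_closure hy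
    exact this

lemma add_subgroup_gen (k : ℕ) (P : AddSubgroup (Fin k → ℤ)) :
    ∃ S : Finset (Fin k → ℤ), S.card ≤ k ∧ AddSubgroup.closure ↑S = P := by
  set Pm := AddSubgroup.toIntSubmodule P with hPm
  obtain ⟨r, b⟩ := Submodule.basisOfPid (Pi.basisFun ℤ (Fin k)) Pm
  have hr : r ≤ k := by
    have h1 : Module.finrank ℤ Pm = r := by
      rw [Module.finrank_eq_card_basis b, Fintype.card_fin]
    have h2 := Submodule.finrank_le Pm
    rw [h1, Module.finrank_fin_fun] at h2
    exact h2
  refine ⟨Finset.image (fun i => (b i : Fin k → ℤ)) Finset.univ,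
    le_trans Finset.card_image_le (by simp [hr]), ?_⟩
  have hspan : Submodule.span ℤ (Set.range (fun i => (b i : Fin k → ℤ))) = Pm := by
    have h : Set.range (fun i => (b i : Fin k → ℤ)) = Pm.subtype '' (Set.range b) := by
      ext x; simp
    rw [h, ← Submodule.map_span, b.span_eq, Submodule.map_top, Submodule.range_subtype]
  have h2 : (↑(Finset.image (fun i => (b i : Fin k → ℤ)) Finset.univ) : Set (Fin k → ℤ))
      = Set.range (fun i => (b i : Fin k → ℤ)) := by
    rw [Finset.coe_image, Finset.coe_univ, Set.image_univ]
  rw [h2, ← Submodule.span_int_eq_addSubgroupClosure, hspan, hPm,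
    AddSubgroup.toIntSubmodule_toAddSubgroup]

lemma mult_subgroup_gen (k : ℕ) (P : Subgroup (Multiplicative (Fin k → ℤ))) :
    ∃ S : Finset (Multiplicative (Fin k → ℤ)), S.card ≤ k ∧ Subgroup.closure ↑S = P := by
  obtain ⟨S, hc, hcl⟩ := add_subgroup_gen k (Subgroup.toAddSubgroup' P)
  refine ⟨S.image Multiplicative.ofAdd, le_trans Finset.card_image_le hc, ?_⟩
  have h : (↑(S.image Multiplicative.ofAdd) : Set (Multiplicative (Fin k → ℤ)))
      = Multiplicative.ofAdd '' ↑S := by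
    rw [Finset.coe_image]
  rw [h, ← toSubgroup_closure, hcl]
  exact AddSubgroup.toSubgroup.apply_symm_apply P

lemma range_subgroup_gen {Γ : Type*} [Group Γ] {k : ℕ}
    (φ : Multiplicative (Fin k → ℤ) →* Γ) (G : Subgroup Γ) (hG : G ≤ φ.range) :
    ∃ S : Finset Γ, S.card ≤ k ∧ Subgroup.closure ↑S = G := by
  classical
  obtain ⟨S₀, hc, hcl⟩ := mult_subgroup_gen k (G.comap φ)
  refine ⟨S₀.image φ, le_trans Finset.card_image_le hc, ?_⟩
  rw [Finset.coe_image, ← MonoidHom.map_closure, hcl, Subgroup.map_comap_eq_self hG]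

lemma ext_gen {Γ Y : Type*} [Group Γ] [Group Y] (ψ : Γ →* Y) (G : Subgroup Γ) {a b : ℕ}
    (hK : ∃ S : Finset Γ, S.card ≤ a ∧ Subgroup.closure ↑S = G ⊓ ψ.ker)
    (hI : ∃ T : Finset Y, T.card ≤ b ∧ Subgroup.closure ↑T = G.map ψ) :
    ∃ U : Finset Γ, U.card ≤ a + b ∧ Subgroup.closure ↑U = G := by
  classical
  obtain ⟨S, hSc, hS⟩ := hK
  obtain ⟨T, hTc, hT⟩ := hI
  have hTsub : ∀ t ∈ T, ∃ g, g ∈ G ∧ ψ g = t := by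
    intro t ht
    have : t ∈ G.map ψ := hT ▸ Subgroup.subset_closure ht
    simpa [Subgroup.mem_map] using this
  choose! f hfG hfψ using hTsub
  refine ⟨S ∪ T.image f, le_trans (Finset.card_union_le _ _)
    (Nat.add_le_add hSc (le_trans Finset.card_image_le hTc)), ?_⟩
  have hSsubG : (↑S : Set Γ) ⊆ G := by
    intro x hx
    exact le_trans (le_of_eq hS) inf_le_left (Subgroup.subset_closure hx)
  have hclTf : Subgroup.closure (↑(T.image f) : Set Γ) ≤ G := by
    rw [Subgroup.closure_le]
    intro x hx
    rw [Finset.coe_image] at hx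
    obtain ⟨t, ht, rfl⟩ := hx
    exact hfG t (by simpa using ht)
  apply le_antisymm
  · rw [Subgroup.closure_le, Finset.coe_union]
    apply Set.union_subset hSsubG
    intro x hx
    exact hclTf (Subgroup.subset_closure hx)
  · intro g hg
    have h1 : ψ g ∈ Subgroup.closure (↑T : Set Y) := by
      rw [hT]; exact ⟨g, hg, rfl⟩
    have h2 : (↑T : Set Y) ⊆ ψ '' ↑(T.image f) := by
      intro t ht
      exact ⟨f t, by simpa [Finset.coe_image] using ⟨t, ht, rfl⟩, hfψ t ht⟩
    have h3 : ψ g ∈ Subgroup.map ψ (Subgroup.closure ↑(T.image f)) := by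
      rw [MonoidHom.map_closure]
      exact Subgroup.closure_mono h2 h1
    obtain ⟨c, hc, hcψ⟩ := h3
    have hcG : c ∈ G := hclTf hc
    have hker : g * c⁻¹ ∈ G ⊓ ψ.ker := by
      rw [Subgroup.mem_inf]
      refine ⟨mul_mem hg (inv_mem hcG), ?_⟩
      rw [MonoidHom.mem_ker, map_mul, map_inv, hcψ, mul_inv_cancel]
    have hgc : g * c⁻¹ ∈ Subgroup.closure (↑(S ∪ T.image f) : Set Γ) := by
      rw [← hS] at hker
      exact Subgroup.closure_mono (by rw [Finset.coe_union]; exact Set.subset_union_left) hker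
    have hcC : c ∈ Subgroup.closure (↑(S ∪ T.image f) : Set Γ) :=
      Subgroup.closure_mono (by rw [Finset.coe_union]; exact Set.subset_union_right) hc
    simpa using mul_mem hgc hcC

/-- Lemma 2.5: if `A` is an abelian group whose torsion subgroup is isomorphic to
`(ℚ/ℤ)^n` and `Λ ⊆ A` is a subgroup isomorphic to `ℤ^m`, then `A/Λ` is strongly
Jordan; more precisely every finite subgroup of `A/Λ` is generated by at most
`n + m` elements. -/
theorem stmt_2 {A : Type*} [CommGroup A] (n m : ℕ)
    (htors : Nonempty (CommGroup.torsion A ≃*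
      Multiplicative (Fin n → ℚ ⧸ AddSubgroup.zmultiples (1 : ℚ))))
    (Λ : Subgroup A) (hΛ : Nonempty (Λ ≃* Multiplicative (Fin m → ℤ))) :
    IsStronglyJordanGroup (A ⧸ Λ) ∧
      ∀ G : Subgroup (A ⧸ Λ), Finite G →
        ∃ S : Finset (A ⧸ Λ), S.card ≤ n + m ∧ Subgroup.closure (S : Set (A ⧸ Λ)) = G := by
  obtain ⟨e⟩ := htors
  obtain ⟨f⟩ := hΛ
  have main : ∀ G : Subgroup (A ⧸ Λ), Finite G →
      ∃ S : Finset (A ⧸ Λ), S.card ≤ n + m ∧ Subgroup.closure (S : Set (A ⧸ Λ)) = G := by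
    intro G hG
    set N := Nat.card G with hN
    have hNpos : 0 < N := Nat.card_pos
    have hpow : ∀ g ∈ G, g ^ N = 1 := by
      intro g hg
      have h : (⟨g, hg⟩ : G) ^ N = 1 := pow_card_eq_one'
      have := congrArg (Subtype.val) h
      simpa using this
    set ΛN : Subgroup A := Λ.map (powMonoidHom N) with hΛN
    have hle : Λ ≤ ((QuotientGroup.mk' ΛN).comp (powMonoidHom N)).ker := by
      intro l hl
      rw [MonoidHom.mem_ker, MonoidHom.comp_apply, QuotientGroup.mk'_apply,
        QuotientGroup.eq_one_iff]
      exact ⟨l, hl, rfl⟩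
    set ψ : (A ⧸ Λ) →* (A ⧸ ΛN) :=
      QuotientGroup.lift Λ ((QuotientGroup.mk' ΛN).comp (powMonoidHom N)) hle with hψdef
    have hψmk : ∀ x : A, ψ (QuotientGroup.mk x) = QuotientGroup.mk (x ^ N) := fun x => rfl
    -- the torsion side homomorphism
    set π₁ : ℤ →+ ℚ ⧸ AddSubgroup.zmultiples (1 : ℚ) :=
      (QuotientAddGroup.mk' _).comp
        (AddMonoidHom.mk' (fun a : ℤ => ((a : ℚ) / N)) (by intro x y; push_cast; ring)) with hπ₁
    set π : (Fin n → ℤ) →+ (Fin n → ℚ ⧸ AddSubgroup.zmultiples (1 : ℚ)) :=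
      AddMonoidHom.mk' (fun w i => π₁ (w i)) (by intro x y; funext i; simp) with hπ
    set φτ : Multiplicative (Fin n → ℤ) →* (A ⧸ Λ) :=
      (QuotientGroup.mk' Λ).comp (((CommGroup.torsion A).subtype).comp
        (e.symm.toMonoidHom.comp (AddMonoidHom.toMultiplicative π))) with hφτ
    set φΛ : Multiplicative (Fin m → ℤ) →* (A ⧸ ΛN) :=
      (QuotientGroup.mk' ΛN).comp (Λ.subtype.comp f.symm.toMonoidHom) with hφΛ
    have hker : G ⊓ ψ.ker ≤ φτ.range := by
      intro g hg
      rw [Subgroup.mem_inf] at hg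
      obtain ⟨hgG, hgk⟩ := hg
      obtain ⟨x, rfl⟩ := QuotientGroup.mk_surjective g
      have h1 : (x ^ N : A) ∈ ΛN := by
        rw [MonoidHom.mem_ker, hψmk, QuotientGroup.eq_one_iff] at hgk
        exact hgk
      obtain ⟨l, hl, hlN⟩ := h1
      have hlN' : l ^ N = x ^ N := hlN
      have htN : (x * l⁻¹) ^ N = 1 := by
        rw [mul_pow, inv_pow, hlN', mul_inv_cancel]
      have htor : x * l⁻¹ ∈ CommGroup.torsion A :=
        isOfFinOrder_iff_pow_eq_one.mpr ⟨N, hNpos, htN⟩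
      set v := Multiplicative.toAdd (e ⟨x * l⁻¹, htor⟩) with hv
      have hvN : N • v = 0 := by
        have h : (⟨x * l⁻¹, htor⟩ : CommGroup.torsion A) ^ N = 1 := by
          ext; simpa using htN
        have h2 := congrArg e h
        rw [map_pow, map_one] at h2
        have h3 := congrArg Multiplicative.toAdd h2
        rw [toAdd_pow, toAdd_one] at h3
        exact h3
      have hcomp : ∀ i, ∃ a : ℤ, π₁ a = v i := by
        intro i
        obtain ⟨r, hr⟩ := QuotientAddGroup.mk_surjective (v i)
        have hNi : N • (v i) = 0 := by
          have := congrFun hvN i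
          simpa using this
        rw [← hr, ← QuotientAddGroup.mk_nsmul, QuotientAddGroup.eq_zero_iff] at hNi
        obtain ⟨c, hc⟩ := AddSubgroup.mem_zmultiples_iff.mp hNi
        refine ⟨c, ?_⟩
        have hcr : (c : ℚ) / N = r := by
          have h5 : (c : ℚ) = N * r := by
            have := hc
            rw [zsmul_eq_mul, mul_one, nsmul_eq_mul] at this
            exact this
          rw [h5]
          field_simp
        rw [hπ₁]
        simp only [AddMonoidHom.comp_apply, AddMonoidHom.mk'_apply, QuotientAddGroup.mk'_apply]
        rw [hcr, hr]
      choose w hw using hcomp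
      refine ⟨Multiplicative.ofAdd w, ?_⟩
      have hπw : π w = v := by
        funext i
        exact hw i
      show QuotientGroup.mk
        ((e.symm ((AddMonoidHom.toMultiplicative π) (Multiplicative.ofAdd w)) :
          CommGroup.torsion A) : A) = QuotientGroup.mk x
      have hstep : (AddMonoidHom.toMultiplicative π) (Multiplicative.ofAdd w)
          = e ⟨x * l⁻¹, htor⟩ := by
        have : Multiplicative.toAdd ((AddMonoidHom.toMultiplicative π)
            (Multiplicative.ofAdd w)) = v := by
          simpa using hπw
        have := congrArg Multiplicative.ofAdd this
        simpa [hv] using this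
      rw [hstep, MulEquiv.symm_apply_apply]
      rw [QuotientGroup.eq]
      have : (x * l⁻¹)⁻¹ * x = l := by group
      rw [this]
      exact hl
    have hrange : G.map ψ ≤ φΛ.range := by
      rintro y ⟨g, hgG, rfl⟩
      obtain ⟨x, rfl⟩ := QuotientGroup.mk_surjective g
      have hxN : (x ^ N : A) ∈ Λ := by
        have h := hpow _ hgG
        rw [← QuotientGroup.mk_pow, QuotientGroup.eq_one_iff] at h
        exact h
      refine ⟨f ⟨x ^ N, hxN⟩, ?_⟩
      show QuotientGroup.mk ((f.symm (f ⟨x ^ N, hxN⟩) : Λ) : A) = ψ (QuotientGroup.mk x)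
      rw [MulEquiv.symm_apply_apply, hψmk]
    obtain ⟨S, hSc, hS⟩ := range_subgroup_gen φτ (G ⊓ ψ.ker) hker
    obtain ⟨T, hTc, hT⟩ := range_subgroup_gen φΛ (G.map ψ) hrange
    exact ext_gen ψ G ⟨S, hSc, hS⟩ ⟨T, hTc, hT⟩
  refine ⟨⟨⟨1, ?_⟩, ⟨n + m, main⟩⟩, main⟩
  intro G hG
  refine ⟨⊤, inferInstance, ?_, ?_⟩
  · intro x y
    exact mul_comm x y
  · rw [Subgroup.index_top]
end

section
/- Let Γ' be a central subgroup of a group Γ, and let φ: Γ → Γ'' be a group homomorphism with kernel Γ'. Suppose there is a constant R such that every finite subgroup of Γ' is generated by at most R elements, and there is a constant J such that every finite subgroup G ⊆ Γ'' contains a cyclic subgroup C ⊆ G of index at most J. Then Γ is strongly Jordan. -/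
/-! Let `G ≤ Γ` be finite and let `C` be a cyclic subgroup of index at most `J` in `φ(G)`.
Since `ker φ` is central, the preimage of `C` in `G` is a central extension of a cyclic group,
hence abelian; its normal core is a normal abelian subgroup of index at most `J!`.
For generation, `G` is generated by generators of `G ∩ ker φ` (at most `R`) together with lifts
of a generator of `C` and of coset representatives of `C` in `φ(G)` (at most `J + 1`). -/

namespace Subgroup

variable {G Q : Type*} [Group G] [Group Q]

theorem index_normalCore_le_factorial (H : Subgroup G) [H.FiniteIndex] :
    H.normalCore.index ≤ H.index.factorial := by
  rw [normalCore_eq_ker, index_ker, index_eq_card, ← Nat.card_perm]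
  exact card_le_card_group _

theorem subgroupOf_center_le_center (H : Subgroup G) : (center G).subgroupOf H ≤ center H :=
  fun _ hx ↦ mem_center_iff.mpr fun y ↦ Subtype.ext (mem_center_iff.mp (mem_subgroupOf.mp hx) y)

theorem isMulCommutative_comap_of_ker_le_center {f : G →* Q} (hf : f.ker ≤ center G)
    (C : Subgroup Q) [IsCyclic C] : IsMulCommutative (C.comap f) := by
  exact ((f.comp (C.comap f).subtype).codRestrict C fun x ↦ x.2)
    |>.isMulCommutative_of_isCyclic_of_ker_le_center fun x hx ↦
      subgroupOf_center_le_center _ (mem_subgroupOf.mpr (hf (congrArg Subtype.val hx)))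

theorem exists_normal_comm_index_le_factorial_of_ker_le_center {f : G →* Q}
    (hf : Function.Surjective f) (hker : f.ker ≤ center G) (C : Subgroup Q) [IsCyclic C]
    [C.FiniteIndex] :
    ∃ A : Subgroup G, A.Normal ∧ (∀ x y : A, x * y = y * x) ∧ A.index ≤ C.index.factorial := by
  have hindex : (C.comap f).index = C.index := index_comap_of_surjective C hf
  have : (C.comap f).FiniteIndex := ⟨hindex ▸ FiniteIndex.index_ne_zero⟩
  have := isMulCommutative_comap_of_ker_le_center hker C
  refine ⟨(C.comap f).normalCore, normalCore_normal _, fun x y ↦ ?_, ?_⟩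
  · exact Subtype.ext (setLike_mul_comm (normalCore_le _ x.2) (normalCore_le _ y.2))
  · exact hindex ▸ index_normalCore_le_factorial _

theorem exists_finset_card_le_index_add_one_closure_eq_top (C : Subgroup G) [IsCyclic C]
    [C.FiniteIndex] : ∃ S : Finset G, S.card ≤ C.index + 1 ∧ closure (S : Set G) = ⊤ := by
  classical
  obtain ⟨c, hc⟩ := IsCyclic.exists_generator (α := C)
  have := Fintype.ofFinite (G ⧸ C)
  let reps : Finset G := Finset.univ.image (Quotient.out : G ⧸ C → G)
  let S : Finset G := insert (c : G) reps
  refine ⟨S, ?_, eq_top_iff.mpr fun x _ ↦ ?_⟩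
  · calc S.card ≤ reps.card + 1 := Finset.card_insert_le _ _
      _ ≤ C.index + 1 := by
        gcongr
        rw [index_eq_card, Nat.card_eq_fintype_card]
        exact Finset.card_image_le
  have hC : C ≤ closure (S : Set G) := fun y hy ↦ by
    obtain ⟨k, hk⟩ := mem_zpowers_iff.mp (hc ⟨y, hy⟩)
    have hy : (c : G) ^ k = y := congrArg Subtype.val hk
    rw [← hy]
    exact zpow_mem (subset_closure (Finset.mem_insert_self _ _)) k
  let q : G ⧸ C := x
  have hrep : q.out ∈ closure (S : Set G) :=
    subset_closure (Finset.mem_insert_of_mem (Finset.mem_image_of_mem _ (Finset.mem_univ q)))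
  have hquot : q.out⁻¹ * x ∈ C := QuotientGroup.eq.mp (QuotientGroup.out_eq' q)
  simpa using mul_mem hrep (hC hquot)

theorem closure_image_subtype_eq_of_closure_eq_top {H : Subgroup G} {S : Set H}
    (hS : closure S = ⊤) : closure (H.subtype '' S) = H := by
  rw [← MonoidHom.map_closure, hS, ← MonoidHom.range_eq_map, range_subtype]

theorem closure_union_eq_of_closure_eq_ker_inf {f : G →* Q} {K : Subgroup G} {S T : Set G}
    (hS : closure S = f.ker ⊓ K) (hTK : T ⊆ K) (hT : (closure T).map f = K.map f) :
    closure (S ∪ T) = K := by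
  have hTK' : closure T ≤ K := (closure_le K).mpr hTK
  refine le_antisymm ((closure_le K).mpr (Set.union_subset ?_ hTK)) fun x hx ↦ ?_
  · exact subset_closure.trans (hS.trans_le inf_le_right : closure S ≤ K)
  obtain ⟨y, hy, hyx⟩ := hT ▸ mem_map_of_mem f hx
  have hker : y⁻¹ * x ∈ closure S := by
    rw [hS]
    exact mem_inf.mpr ⟨by simp [hyx], mul_mem (inv_mem (hTK' hy)) hx⟩
  simpa using mul_mem (closure_mono Set.subset_union_right hy)
    (closure_mono Set.subset_union_left hker)

theorem exists_finset_card_le_closure_eq_of_closure_eq_ker_inf {f : G →* Q} {K : Subgroup G}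
    {S : Finset G} (hS : closure (S : Set G) = f.ker ⊓ K) {T : Finset Q}
    (hT : closure (T : Set Q) = K.map f) :
    ∃ U : Finset G, U.card ≤ S.card + T.card ∧ closure (U : Set G) = K := by
  classical
  have hlift : ∀ q ∈ T, ∃ g ∈ K, f g = q := fun q hq ↦ mem_map.mp (hT ▸ subset_closure hq)
  choose! lift hliftK hliftf using hlift
  refine ⟨S ∪ T.image lift, ?_, ?_⟩
  · exact (Finset.card_union_le _ _).trans (Nat.add_le_add_left Finset.card_image_le _)
  rw [Finset.coe_union]
  refine closure_union_eq_of_closure_eq_ker_inf hS ?_ ?_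
  · simpa [Set.subset_def] using hliftK
  · rw [MonoidHom.map_closure, ← hT, Finset.coe_image, ← Set.image_comp]
    exact congrArg closure ((Set.image_congr hliftf).trans (Set.image_id' _))

end Subgroup

open Subgroup

/-- Lemma 2.6: let Γ' be a central subgroup of Γ, realized as the kernel of a
homomorphism φ : Γ → Γ''. If there is a constant R such that every finite subgroup
of Γ' is generated by at most R elements, and a constant J such that every finite
subgroup of Γ'' contains a cyclic subgroup of index at most J, then Γ is strongly
Jordan. -/
theorem stmt_3 {Γ Γ'' : Type*} [Group Γ] [Group Γ'']
    (φ : Γ →* Γ'') (hcentral : φ.ker ≤ Subgroup.center Γ)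
    (R : ℕ)
    (hR : ∀ G : Subgroup Γ, G ≤ φ.ker → Finite G →
      ∃ S : Finset Γ, S.card ≤ R ∧ Subgroup.closure (S : Set Γ) = G)
    (J : ℕ)
    (hJ : ∀ G : Subgroup Γ'', Finite G →
      ∃ C : Subgroup G, IsCyclic C ∧ C.index ≤ J) :
    IsStronglyJordanGroup Γ := by
  have himage : ∀ G : Subgroup Γ, Finite G → Finite (G.map φ) :=
    fun G _ ↦ Finite.of_surjective _ (φ.subgroupMap_surjective G)
  refine ⟨⟨J.factorial, fun G hG ↦ ?_⟩, R + (J + 1), fun G hG ↦ ?_⟩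
  · have := himage G hG
    obtain ⟨C, _, hCJ⟩ := hJ _ this
    have hker : (φ.subgroupMap G).ker ≤ center G := fun x hx ↦
      subgroupOf_center_le_center G (mem_subgroupOf.mpr (hcentral (congrArg Subtype.val hx)))
    obtain ⟨A, hA, hAcomm, hAindex⟩ := exists_normal_comm_index_le_factorial_of_ker_le_center
      (φ.subgroupMap_surjective G) hker C
    exact ⟨A, hA, hAcomm, hAindex.trans (Nat.factorial_le hCJ)⟩
  · have := himage G hG
    obtain ⟨C, _, hCJ⟩ := hJ _ this
    obtain ⟨T, hTcard, hT⟩ := exists_finset_card_le_index_add_one_closure_eq_top C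
    obtain ⟨S, hScard, hS⟩ := hR (φ.ker ⊓ G) inf_le_left
      (Finite.of_injective _ (inclusion_injective inf_le_right))
    obtain ⟨U, hUcard, hU⟩ := exists_finset_card_le_closure_eq_of_closure_eq_ker_inf hS
      (T := T.map (Function.Embedding.subtype _))
      (by simpa using closure_image_subtype_eq_of_closure_eq_top hT)
    exact ⟨U, by rw [Finset.card_map] at hUcard; omega, hU⟩
end

section
/- For every positive integer n there exists a constant ε = ε(n) > 0 with the following property: if α is an algebraic integer of degree n over ℚ such that every Galois conjugate α' of α (i.e., every complex root of the minimal polynomial of α over ℚ) satisfies 1 − ε < |α'| < 1 + ε, then α is a root of unity. -/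
/-!
If every conjugate of `α` has modulus `< 1 + ε`, the Mahler measure of the minimal polynomial
of `α` over `ℤ` is at most `(1 + ε) ^ n`. By Northcott's theorem the Mahler measures of integer
polynomials of degree `≤ n` have no accumulation point at `1`, so for small `ε` this measure is
exactly `1`; by Kronecker's theorem every nonzero root of such a polynomial is a root of unity.
-/

open Polynomial Filter Topology

namespace Polynomial

theorem Monic.mahlerMeasure_le_pow_natDegree {p : ℂ[X]} (hp : p.Monic) {r : ℝ}
    (hr : 1 ≤ r) (h : ∀ z ∈ p.roots, ‖z‖ ≤ r) : p.mahlerMeasure ≤ r ^ p.natDegree := by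
  rw [mahlerMeasure_eq_leadingCoeff_mul_prod_roots, hp.leadingCoeff, norm_one, one_mul]
  calc (p.roots.map fun z ↦ max 1 ‖z‖).prod
      ≤ (p.roots.map fun _ ↦ r).prod :=
        Multiset.prod_map_le_prod_map₀ _ _ (fun _ _ ↦ zero_le_one.trans (le_max_left _ _))
          fun z hz ↦ max_le hr (h z hz)
    _ = r ^ p.roots.card := by simp
    _ ≤ r ^ p.natDegree := pow_le_pow_right₀ hr p.card_roots'

/-- By Northcott's theorem only finitely many of these Mahler measures lie in `(1, 2]`. -/
theorem exists_pos_mahlerMeasure_gap (n : ℕ) :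
    ∃ δ > 0, ∀ p : ℤ[X], p.natDegree ≤ n →
      (p.map (Int.castRingHom ℂ)).mahlerMeasure < 1 + δ →
      (p.map (Int.castRingHom ℂ)).mahlerMeasure ≤ 1 := by
  set M : ℤ[X] → ℝ := fun p ↦ (p.map (Int.castRingHom ℂ)).mahlerMeasure
  have hfin : (M '' {p | p.natDegree ≤ n ∧ M p ≤ 2} ∩ Set.Ioi 1).Finite :=
    ((finite_mahlerMeasure_le n 2).image M).inter_of_left _
  obtain ⟨δ, hδ, hball⟩ := Metric.isOpen_iff.mp hfin.isClosed.isOpen_compl 1 (by simp)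
  refine ⟨min δ 1, by positivity, fun p hdeg hlt ↦ not_lt.mp fun h1 ↦ ?_⟩
  refine hball (Metric.mem_ball.mpr ?_) ⟨⟨p, ⟨hdeg, ?_⟩, rfl⟩, h1⟩
  · rw [Real.dist_eq, abs_of_pos (sub_pos.mpr h1)]
    linarith [min_le_left δ 1]
  · linarith [min_le_right δ 1]

end Polynomial

theorem exists_pos_lt_one_one_add_pow_lt (n : ℕ) {δ : ℝ} (hδ : 0 < δ) :
    ∃ ε : ℝ, 0 < ε ∧ ε < 1 ∧ (1 + ε) ^ n < 1 + δ := by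
  have hcont : Tendsto (fun ε : ℝ ↦ (1 + ε) ^ n) (𝓝[>] 0) (𝓝 1) :=
    tendsto_nhdsWithin_of_tendsto_nhds <|
      ((continuous_const.add continuous_id).pow n).tendsto' 0 1 (by simp)
  obtain ⟨ε, hpow, hε, hε1⟩ := ((hcont.eventually (gt_mem_nhds (lt_add_of_pos_right 1 hδ))).and
    (Ioo_mem_nhdsGT zero_lt_one)).exists
  exact ⟨ε, hε, hε1, hpow⟩

theorem aeval_minpoly_rat_eq_zero_of_mem_roots {α z : ℂ} (hα : IsIntegral ℤ α)
    (hz : z ∈ ((minpoly ℤ α).map (Int.castRingHom ℂ)).roots) : aeval z (minpoly ℚ α) = 0 := by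
  rw [minpoly.isIntegrallyClosed_eq_field_fractions' ℚ hα, aeval_map_algebraMap]
  simpa [mem_roots', aeval_def, eval_map] using (mem_roots'.mp hz).2

theorem stmt_6_general (n : ℕ) :
    ∃ ε : ℝ, 0 < ε ∧
      ∀ α : ℂ, IsIntegral ℤ α → (minpoly ℚ α).natDegree = n →
        (∀ α' : ℂ, Polynomial.aeval α' (minpoly ℚ α) = 0 →
          1 - ε < ‖α'‖ ∧ ‖α'‖ < 1 + ε) →
        ∃ k : ℕ, 0 < k ∧ α ^ k = 1 := by
  obtain ⟨δ, hδ, hgap⟩ := exists_pos_mahlerMeasure_gap n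
  obtain ⟨ε, hε, hε1, hεδ⟩ := exists_pos_lt_one_one_add_pow_lt n hδ
  refine ⟨ε, hε, fun α hα hdeg hconj ↦ ?_⟩
  have hα0 : α ≠ 0 := by
    rintro rfl
    linarith [(hconj 0 (minpoly.aeval ℚ 0)).1, norm_zero (E := ℂ)]
  have hpdeg : (minpoly ℤ α).natDegree = n := by
    rw [← hdeg, minpoly.isIntegrallyClosed_eq_field_fractions' ℚ hα,
      (minpoly.monic hα).natDegree_map]
  have hM : ((minpoly ℤ α).map (Int.castRingHom ℂ)).mahlerMeasure ≤ (1 + ε) ^ n := by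
    have := ((minpoly.monic hα).map _).mahlerMeasure_le_pow_natDegree
      (by linarith) fun z hz ↦ (hconj z (aeval_minpoly_rat_eq_zero_of_mem_roots hα hz)).2.le
    rwa [(minpoly.monic hα).natDegree_map, hpdeg] at this
  have hM1 : ((minpoly ℤ α).map (Int.castRingHom ℂ)).mahlerMeasure = 1 :=
    le_antisymm (hgap _ hpdeg.le (by linarith))
      (one_le_mahlerMeasure_of_ne_zero (minpoly.ne_zero hα))
  exact pow_eq_one_of_mahlerMeasure_eq_one hM1 hα0
    (mem_aroots.mpr ⟨minpoly.ne_zero hα, minpoly.aeval ℤ α⟩)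

/-- Lemma A.1(ii): for every positive integer n there is ε = ε(n) > 0 such that any
algebraic integer α of degree n over ℚ, all of whose Galois conjugates α' (the complex
roots of the minimal polynomial of α over ℚ) satisfy 1 − ε < |α'| < 1 + ε, is a root
of unity. -/
theorem stmt_6 (n : ℕ) (hn : 0 < n) :
    ∃ ε : ℝ, 0 < ε ∧
      ∀ α : ℂ, IsIntegral ℤ α → (minpoly ℚ α).natDegree = n →
        (∀ α' : ℂ, Polynomial.aeval α' (minpoly ℚ α) = 0 →
          1 - ε < ‖α'‖ ∧ ‖α'‖ < 1 + ε) →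
        ∃ k : ℕ, 0 < k ∧ α ^ k = 1 :=
  stmt_6_general n
end

section
/- Let M be an n×n integer matrix with determinant ±1 (i.e., M ∈ GLₙ(ℤ)). Suppose that for every C there exists an integer k > C and a matrix R_k ∈ GLₙ(ℤ) with R_k^k = M. Then every complex eigenvalue of M is a root of unity. -/
/-!
If `R ^ k = M`, every eigenvalue `μ` of `M` is `ρ ^ k` for an eigenvalue `ρ` of `R`, and the
eigenvalues of `R` have absolute value at most `max B 1`, where `B` bounds those of `M`. So the
characteristic polynomial of `R` is a monic integer polynomial of degree `n` with roots bounded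
independently of `k`, hence with bounded coefficients: all such `ρ` lie in one finite set. For
infinitely many `k` two of them coincide, `ρ ^ a = ρ ^ b = μ` with `a < b`, and as `μ ≠ 0` this
forces `ρ`, hence `μ`, to have finite order.
-/

open Matrix Polynomial

theorem le_max_one_of_pow_le {α : Type*} [Semiring α] [LinearOrder α] [IsOrderedRing α]
    {a c : α} {k : ℕ} (hk : k ≠ 0) (h : a ^ k ≤ c) : a ≤ max c 1 := by
  rcases le_or_gt a 1 with ha | ha
  · exact ha.trans (le_max_right _ _)
  · exact (le_self_pow₀ ha.le hk).trans (h.trans (le_max_left _ _))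

theorem spectrum.norm_le_max_one_of_pow {𝕜 A : Type*} [NormedField 𝕜] [Ring A] [Algebra 𝕜 A]
    {a : A} {k : ℕ} (hk : k ≠ 0) {c : ℝ} (hc : ∀ z ∈ spectrum 𝕜 (a ^ k), ‖z‖ ≤ c)
    {ρ : 𝕜} (hρ : ρ ∈ spectrum 𝕜 a) : ‖ρ‖ ≤ max c 1 :=
  le_max_one_of_pow_le hk <| norm_pow ρ k ▸ hc _ (spectrum.pow_mem_pow a k hρ)

theorem isOfFinOrder_of_pow_eq_pow {G : Type*} [MonoidWithZero G] [IsRightCancelMulZero G]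
    {x : G} {a b : ℕ} (hab : a < b) (hxa : x ^ a ≠ 0) (h : x ^ a = x ^ b) : IsOfFinOrder x := by
  rw [← Nat.sub_add_cancel hab.le, pow_add, eq_comm, mul_left_eq_self₀] at h
  exact isOfFinOrder_iff_pow_eq_one.mpr ⟨b - a, Nat.sub_pos_of_lt hab, h.resolve_right hxa⟩

theorem isOfFinOrder_of_infinite_pow_roots {G : Type*} [MonoidWithZero G]
    [IsRightCancelMulZero G] {μ : G} (hμ : μ ≠ 0) {S : Set G} (hS : S.Finite) {K : Set ℕ}
    (hK : K.Infinite) (h : ∀ k ∈ K, ∃ ρ ∈ S, ρ ^ k = μ) : IsOfFinOrder μ := by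
  choose! ρ hρS hρμ using h
  obtain ⟨a, ha, b, hb, hab, hρ⟩ := hK.exists_ne_map_eq_of_mapsTo hρS hS
  wlog hlt : a < b generalizing a b
  · exact this b hb a ha hab.symm hρ.symm (hab.lt_or_gt.resolve_left hlt)
  have hx : IsOfFinOrder (ρ a) :=
    isOfFinOrder_of_pow_eq_pow hlt (by rwa [hρμ a ha]) (by rw [hρμ a ha, hρ, hρμ b hb])
  simpa only [hρμ a ha] using hx.pow (n := a)

def boundedMonicRoots (d : ℕ) (c : ℝ) : Set ℂ :=
  {z | ∃ q : ℤ[X], q.Monic ∧ q.natDegree ≤ d ∧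
    (∀ w ∈ (q.map (Int.castRingHom ℂ)).roots, ‖w‖ ≤ c) ∧ z ∈ (q.map (Int.castRingHom ℂ)).roots}

theorem finite_boundedMonicRoots (d : ℕ) (c : ℝ) : (boundedMonicRoots d c).Finite := by
  classical
  set C : ℤ := ⌈max c 1 ^ d * d.choose (d / 2)⌉
  refine (bUnion_roots_finite (Int.castRingHom ℂ) d (Set.finite_Icc (-C) C)).subset ?_
  rintro z ⟨q, hmonic, hdeg, hroots, hz⟩
  refine Set.mem_iUnion₂.mpr ⟨q, ⟨hdeg, fun i => ?_⟩, Multiset.mem_toFinset.mpr hz⟩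
  rw [Set.mem_Icc, ← abs_le, ← @Int.cast_le ℝ, Int.cast_abs]
  refine le_trans ?_ ((coeff_bdd_of_roots_le _ hmonic (IsAlgClosed.splits _) hdeg hroots i).trans
    (Int.le_ceil _))
  rw [coeff_map, eq_intCast, Complex.norm_intCast]

theorem spectrum_map_intCast_subset_boundedMonicRoots {ι : Type*} [Fintype ι] [DecidableEq ι]
    (R : Matrix ι ι ℤ) {c : ℝ} (hc : ∀ z ∈ spectrum ℂ (R.map ((↑) : ℤ → ℂ)), ‖z‖ ≤ c) :
    spectrum ℂ (R.map ((↑) : ℤ → ℂ)) ⊆ boundedMonicRoots (Fintype.card ι) c := by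
  have mem_roots_iff (w : ℂ) :
      w ∈ (R.charpoly.map (Int.castRingHom ℂ)).roots ↔ w ∈ spectrum ℂ (R.map ((↑) : ℤ → ℂ)) := by
    rw [← charpoly_map, mem_roots (charpoly_monic _).ne_zero, mem_spectrum_iff_isRoot_charpoly]
    rfl
  intro ρ hρ
  exact ⟨R.charpoly, R.charpoly_monic, R.charpoly_natDegree_eq_dim.le,
    fun w hw => hc w ((mem_roots_iff w).mp hw), (mem_roots_iff ρ).mpr hρ⟩

/-- Lemma A.2: let M ∈ GLₙ(ℤ). If for every C there is an integer k > C and a matrix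
Rₖ ∈ GLₙ(ℤ) with Rₖ^k = M, then every complex eigenvalue of M (i.e. every complex
root of its characteristic polynomial) is a root of unity. -/
theorem stmt_7 (n : ℕ) (M : GL (Fin n) ℤ)
    (h : ∀ C : ℕ, ∃ k : ℕ, C < k ∧ ∃ R : GL (Fin n) ℤ, R ^ k = M) :
    ∀ μ : ℂ,
      (((M : Matrix (Fin n) (Fin n) ℤ).map ((↑) : ℤ → ℂ)).charpoly).IsRoot μ →
      ∃ k : ℕ, 0 < k ∧ μ ^ k = 1 := by
  intro μ hμ
  set A : Matrix (Fin n) (Fin n) ℂ := (M : Matrix (Fin n) (Fin n) ℤ).map ((↑) : ℤ → ℂ)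
  rw [← mem_spectrum_iff_isRoot_charpoly] at hμ
  have hμ0 : μ ≠ 0 := by
    rintro rfl
    exact (spectrum.zero_notMem_iff ℂ).mpr (M.isUnit.map (Int.castRingHom ℂ).mapMatrix) hμ
  obtain ⟨B, hB⟩ := (A.finite_spectrum.image (‖·‖)).bddAbove
  have hK : {k | 0 < k ∧ ∃ R : GL (Fin n) ℤ, R ^ k = M}.Infinite := by
    refine Set.infinite_of_not_bddAbove fun ⟨m, hm⟩ => ?_
    obtain ⟨k, hk, R, hR⟩ := h m
    exact hk.not_ge (hm ⟨by omega, R, hR⟩)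
  refine isOfFinOrder_iff_pow_eq_one.mp <| isOfFinOrder_of_infinite_pow_roots hμ0
    (finite_boundedMonicRoots n (max B 1)) hK ?_
  rintro k ⟨hk, R, rfl⟩
  set Rc : Matrix (Fin n) (Fin n) ℂ := (R : Matrix (Fin n) (Fin n) ℤ).map ((↑) : ℤ → ℂ)
  have hA : A = Rc ^ k := by
    simp only [A, Rc, Units.val_pow_eq_pow_val]
    exact Matrix.map_pow _ (Int.castRingHom ℂ) k
  rw [hA, spectrum.map_pow_of_pos _ hk] at hμ
  obtain ⟨ρ, hρ, rfl⟩ := hμ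
  have hbound (z : ℂ) (hz : z ∈ spectrum ℂ Rc) : ‖z‖ ≤ max B 1 :=
    spectrum.norm_le_max_one_of_pow hk.ne' (fun w hw => hB ⟨w, hA ▸ hw, rfl⟩) hz
  exact ⟨ρ, Fintype.card_fin n ▸ spectrum_map_intCast_subset_boundedMonicRoots _ hbound hρ, rfl⟩
end

section
/- Let Δ₀ be a group, let Γ₁ ≅ ℤ be an infinite cyclic group generated by γ, and let Δ = Δ₀ ⋊ Γ₁ be a semidirect product. Let Δ' ⊆ Δ be a normal subgroup of finite index. Then: (i) Δ' = Δ₀' ⋊ Γ₁', where Δ₀' = Δ' ∩ Δ₀ and Γ₁' ≅ ℤ is the infinite cyclic subgroup generated by γ^k δ' for some positive integer k and some δ' ∈ Δ₀; (ii) the quotient Δ/Δ' has a normal subgroup of index k isomorphic to Δ₀/Δ₀'. -/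
open SemidirectProduct Subgroup Multiplicative

lemma aux_toSubgroup_zmultiples (a : ℤ) :
    AddSubgroup.toSubgroup (AddSubgroup.zmultiples a) = Subgroup.zpowers (ofAdd a) := by
  ext x
  simp only [AddSubgroup.toSubgroup, AddSubgroup.mem_zmultiples_iff, Subgroup.mem_zpowers_iff]
  constructor
  · rintro ⟨k, hk⟩
    refine ⟨k, ?_⟩
    simp only at hk
    rw [← ofAdd_zsmul, hk]; rfl
  · rintro ⟨k, hk⟩
    refine ⟨k, ?_⟩
    show k • a = toAdd x
    rw [← hk, ← ofAdd_zsmul]; rfl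

lemma aux_index_zpowers_ofAdd (a : ℤ) :
    (Subgroup.zpowers (ofAdd a)).index = a.natAbs := by
  rw [← Int.index_zmultiples a]
  unfold Subgroup.index AddSubgroup.index
  refine Nat.card_congr (Quotient.congr Multiplicative.toAdd fun x y => ?_)
  rw [QuotientGroup.leftRel_apply, QuotientAddGroup.leftRel_apply,
    Subgroup.mem_zpowers_iff, AddSubgroup.mem_zmultiples_iff]
  constructor
  · rintro ⟨k, hk⟩
    refine ⟨k, ?_⟩
    have := congrArg Multiplicative.toAdd hk
    rw [← ofAdd_zsmul] at this
    simp only [toAdd_ofAdd, toAdd_mul, toAdd_inv] at this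
    omega
  · rintro ⟨k, hk⟩
    refine ⟨k, ?_⟩
    have : ofAdd (k • a) = ofAdd (-toAdd x + toAdd y) := congrArg ofAdd hk
    rw [ofAdd_zsmul] at this
    rw [this]
    simp [ofAdd_add, mul_comm]
open SemidirectProduct Subgroup Multiplicative




/-- Lemma A.4: let Δ = Δ₀ ⋊ ⟨γ⟩ be a semidirect product of a group Δ₀ by an infinite
cyclic group, and let Δ' be a normal subgroup of finite index in Δ. Then
(i) Δ' = Δ₀' ⋊ Γ₁' where Δ₀' = Δ' ∩ Δ₀ and Γ₁' ≅ ℤ is generated by γ^k δ' for some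
positive integer k and some δ' ∈ Δ₀; (ii) Δ/Δ' has a normal subgroup of index k
isomorphic to Δ₀/Δ₀'. -/
theorem stmt_10 {Δ₀ : Type*} [Group Δ₀] (φ : Multiplicative ℤ →* MulAut Δ₀)
    (Δ' : Subgroup (SemidirectProduct Δ₀ (Multiplicative ℤ) φ)) [hn : Δ'.Normal]
    (hfi : Δ'.FiniteIndex) :
    ∃ k : ℕ, 0 < k ∧ ∃ δ' : Δ₀,
      (letI g := SemidirectProduct.inr (Multiplicative.ofAdd (k : ℤ)) *
          SemidirectProduct.inl δ'
       Δ' = (Δ' ⊓ (SemidirectProduct.inl : Δ₀ →* SemidirectProduct Δ₀ (Multiplicative ℤ) φ).range)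
              ⊔ Subgroup.zpowers g ∧
        (Δ' ⊓ (SemidirectProduct.inl : Δ₀ →* SemidirectProduct Δ₀ (Multiplicative ℤ) φ).range)
            ⊓ Subgroup.zpowers g = ⊥) ∧
      ∃ N : Subgroup (SemidirectProduct Δ₀ (Multiplicative ℤ) φ ⧸ Δ'),
        N.Normal ∧ N.index = k ∧
          Nonempty (N ≃*
            (Δ₀ ⧸ Subgroup.comap
              (SemidirectProduct.inl : Δ₀ →* SemidirectProduct Δ₀ (Multiplicative ℤ) φ) Δ')) := by
  classical
  set π : SemidirectProduct Δ₀ (Multiplicative ℤ) φ →* Multiplicative ℤ := rightHom with hπ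
  set P : Subgroup (Multiplicative ℤ) := Δ'.map π with hPdef
  -- P has nonzero index
  have hPindex : P.index ≠ 0 := by
    have h1 : (P.comap π).index = P.index :=
      Subgroup.index_comap_of_surjective P rightHom_surjective
    have h2 : (P.comap π).index ∣ Δ'.index :=
      Subgroup.index_dvd_of_le (Subgroup.le_comap_map π Δ')
    rw [h1] at h2
    exact fun h0 => hfi.index_ne_zero (Nat.eq_zero_of_zero_dvd (h0 ▸ h2))
  -- P is cyclic: P = zpowers (ofAdd a)
  obtain ⟨a, ha⟩ := Int.subgroup_cyclic (Subgroup.toAddSubgroup' P)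
  rw [← AddSubgroup.zmultiples_eq_closure] at ha
  have hPa : P = Subgroup.zpowers (ofAdd a) := by
    rw [← aux_toSubgroup_zmultiples, ← ha]
    exact (AddSubgroup.toSubgroup.apply_symm_apply P).symm
  have hane : a ≠ 0 := by
    intro h0
    rw [h0] at hPa
    apply hPindex
    rw [hPa, aux_index_zpowers_ofAdd]
    rfl
  set k : ℕ := a.natAbs with hk
  have hkpos : 0 < k := Int.natAbs_pos.mpr hane
  have hPk : P = Subgroup.zpowers (ofAdd (k : ℤ)) := by
    rcases Int.natAbs_eq a with h | h
    · rw [hPa, ← h]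
    · rw [hPa, h]
      rw [show ofAdd (-(k:ℤ)) = (ofAdd (k:ℤ))⁻¹ from rfl, Subgroup.zpowers_inv]
  have hPindexk : P.index = k := by
    rw [hPk, aux_index_zpowers_ofAdd]
    simp
  -- pick x ∈ Δ' with π x = ofAdd k
  have hmem : ofAdd (k : ℤ) ∈ P := by
    rw [hPk]; exact Subgroup.mem_zpowers _
  obtain ⟨x, hxΔ, hxπ⟩ := hmem
  refine ⟨k, hkpos, (φ (ofAdd (k : ℤ)))⁻¹ x.left, ?_, ?_⟩
  all_goals
    set δ' : Δ₀ := (φ (ofAdd (k : ℤ)))⁻¹ x.left with hδ'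
    set g : SemidirectProduct Δ₀ (Multiplicative ℤ) φ :=
      inr (ofAdd (k : ℤ)) * inl δ' with hg
    have hxr : x.right = ofAdd (k : ℤ) := hxπ
    have hgx : g = x := by
      ext
      · simp [hg, hδ']
      · simp [hg, hxr]
    have hgΔ : g ∈ Δ' := hgx ▸ hxΔ
    have hπg : π g = ofAdd (k : ℤ) := by rw [hgx]; exact hxπ
  · -- part (i)
    constructor
    · apply le_antisymm
      · intro y hy
        have hyP : π y ∈ P := ⟨y, hy, rfl⟩
        rw [hPk] at hyP
        obtain ⟨m, hm'⟩ := hyP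
        have hm : ofAdd (k:ℤ) ^ m = π y := hm'
        have hmem1 : y * (g ^ m)⁻¹ ∈ Δ' ⊓ (inl : Δ₀ →* _).range := by
          constructor
          · exact Δ'.mul_mem hy (Δ'.inv_mem (Δ'.zpow_mem hgΔ m))
          · rw [range_inl_eq_ker_rightHom]
            show π (y * (g ^ m)⁻¹) = 1
            rw [map_mul, map_inv, map_zpow, hπg, hm, mul_inv_cancel]
        have hyeq : y = (y * (g ^ m)⁻¹) * g ^ m := by group
        rw [hyeq]
        exact Subgroup.mul_mem _ (Subgroup.mem_sup_left hmem1)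
            (Subgroup.mem_sup_right (zpow_mem (Subgroup.mem_zpowers g) m))
      · exact sup_le (fun y hy => hy.1) (by
          rw [Subgroup.zpowers_le]; exact hgΔ)
    · rw [eq_bot_iff]
      rintro y ⟨⟨-, hy2⟩, hy3⟩
      obtain ⟨m, hm'⟩ := hy3
      have hm : g ^ m = y := hm'
      have h1 : π y = 1 := by
        rw [range_inl_eq_ker_rightHom] at hy2; exact hy2
      rw [← hm, map_zpow, hπg, ← ofAdd_zsmul] at h1
      have hm1 : m = 0 := by
        have h2 := congrArg Multiplicative.toAdd h1
        simp at h2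
        rcases h2 with h | h
        · exact absurd h (by exact_mod_cast hkpos.ne')
        · exact h
      rw [← hm, hm1]
      simp [Subgroup.mem_bot]
  · -- part (ii)
    set Q := QuotientGroup.mk' Δ' with hQ
    refine ⟨Subgroup.map Q (inl : Δ₀ →* SemidirectProduct Δ₀ (Multiplicative ℤ) φ).range, ?_, ?_, ?_⟩
    · have : ((inl : Δ₀ →* SemidirectProduct Δ₀ (Multiplicative ℤ) φ).range).Normal := by
        rw [range_inl_eq_ker_rightHom]; exact π.normal_ker
      exact Subgroup.Normal.map this Q (QuotientGroup.mk'_surjective Δ')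
    · rw [← Subgroup.index_comap_of_surjective _ (QuotientGroup.mk'_surjective Δ'),
        Subgroup.comap_map_eq, QuotientGroup.ker_mk']
      have hsup : (inl : Δ₀ →* SemidirectProduct Δ₀ (Multiplicative ℤ) φ).range ⊔ Δ' = P.comap π := by
        apply le_antisymm
        · refine sup_le ?_ ?_
          · rw [range_inl_eq_ker_rightHom]
            intro y hy
            show π y ∈ P
            rw [show π y = 1 from hy]
            exact P.one_mem
          · exact Subgroup.le_comap_map π Δ'
        · intro y hy
          have : π y ∈ P := hy
          rw [hPk] at this
          obtain ⟨m, hm'⟩ := this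
          have hm : ofAdd (k:ℤ) ^ m = π y := hm'
          have h1 : y * (g ^ m)⁻¹ ∈ (inl : Δ₀ →* SemidirectProduct Δ₀ (Multiplicative ℤ) φ).range := by
            rw [range_inl_eq_ker_rightHom]
            show π (y * (g ^ m)⁻¹) = 1
            rw [map_mul, map_inv, map_zpow, hπg, hm, mul_inv_cancel]
          have hyeq : y = (y * (g ^ m)⁻¹) * g ^ m := by group
          rw [hyeq]
          exact Subgroup.mul_mem _ (Subgroup.mem_sup_left h1)
              (Subgroup.mem_sup_right (Δ'.zpow_mem hgΔ m))
      rw [hsup, Subgroup.index_comap_of_surjective _ rightHom_surjective, hPindexk]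
    · set f : Δ₀ →* _ := Q.comp (inl : Δ₀ →* SemidirectProduct Δ₀ (Multiplicative ℤ) φ) with hf
      have hrange : f.range = Subgroup.map Q (inl : Δ₀ →* SemidirectProduct Δ₀ (Multiplicative ℤ) φ).range :=
        MonoidHom.range_comp _ _
      have hker : f.ker = Subgroup.comap (inl : Δ₀ →* SemidirectProduct Δ₀ (Multiplicative ℤ) φ) Δ' := by
        rw [hf, ← MonoidHom.comap_ker, QuotientGroup.ker_mk']
      exact ⟨(MulEquiv.subgroupCongr hrange.symm).trans
        ((QuotientGroup.quotientKerEquivRange f).symm.trans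
          (QuotientGroup.quotientMulEquivOfEq hker))⟩
end

section
/- Let r be a positive integer, H(r) = ⟨δ₁, δ₂, δ₃ ∣ [δ₁,δ₃] = [δ₂,δ₃] = 1, [δ₁,δ₂] = δ₃^r⟩, and let Γ₀ ⊆ H(r) be a normal subgroup of finite index; put G₀ = H(r)/Γ₀. Then there are integers a₁, a₂, a₃, b₁, b₂, b₃ with a₁b₂ − a₂b₁ ≠ 0 and an integer c > 0 such that Γ₀ is generated by δ₁^{a₁}δ₂^{a₂}δ₃^{a₃}, δ₁^{b₁}δ₂^{b₂}δ₃^{b₃}, and δ₃^c. Moreover, c divides r·gcd(a₁, a₂, b₁, b₂), one has Γ₀ ≅ H(r·|a₁b₂ − a₂b₁|/c), and the group G₀ contains a normal abelian subgroup of index at most gcd(a₁, b₁). -/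
/-- The "discrete Heisenberg group" H(r): the group with presentation
⟨δ₁, δ₂, δ₃ ∣ [δ₁,δ₃] = [δ₂,δ₃] = 1, [δ₁,δ₂] = δ₃^r⟩, realized concretely as the
group of upper unitriangular 3×3 rational matrices with (1,2)-entry `a ∈ ℤ`,
(2,3)-entry `b ∈ ℤ` and (1,3)-entry `c/r` with `c ∈ ℤ`; the element ⟨a, b, c⟩
corresponds to δ₁^a δ₂^b (δ₃-part c), with δ₁ = ⟨1,0,0⟩, δ₂ = ⟨0,1,0⟩,
δ₃ = ⟨0,0,1⟩. -/
@[ext]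
structure Heis (r : ℕ) : Type where
  a : ℤ
  b : ℤ
  c : ℤ

namespace Heis

variable {r : ℕ}

instance : Mul (Heis r) :=
  ⟨fun x y => ⟨x.a + y.a, x.b + y.b, x.c + y.c + r * x.a * y.b⟩⟩

instance : One (Heis r) := ⟨⟨0, 0, 0⟩⟩

instance : Inv (Heis r) :=
  ⟨fun x => ⟨-x.a, -x.b, -x.c + r * x.a * x.b⟩⟩

@[simp] lemma mul_a (x y : Heis r) : (x * y).a = x.a + y.a := rfl
@[simp] lemma mul_b (x y : Heis r) : (x * y).b = x.b + y.b := rfl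
@[simp] lemma mul_c (x y : Heis r) : (x * y).c = x.c + y.c + r * x.a * y.b := rfl
@[simp] lemma one_a : (1 : Heis r).a = 0 := rfl
@[simp] lemma one_b : (1 : Heis r).b = 0 := rfl
@[simp] lemma one_c : (1 : Heis r).c = 0 := rfl
@[simp] lemma inv_a (x : Heis r) : x⁻¹.a = -x.a := rfl
@[simp] lemma inv_b (x : Heis r) : x⁻¹.b = -x.b := rfl
@[simp] lemma inv_c (x : Heis r) : x⁻¹.c = -x.c + r * x.a * x.b := rfl

instance instGroup : Group (Heis r) where
  mul_assoc x y z := by ext <;> simp <;> ring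
  one_mul x := by ext <;> simp
  mul_one x := by ext <;> simp
  inv_mul_cancel x := by ext <;> simp <;> ring

/-- The generator δ₁ of H(r). -/
def δ₁ : Heis r := ⟨1, 0, 0⟩

/-- The generator δ₂ of H(r). -/
def δ₂ : Heis r := ⟨0, 1, 0⟩

/-- The generator δ₃ of H(r); it generates the center of H(r) (for r > 0). -/
def δ₃ : Heis r := ⟨0, 0, 1⟩

end Heis

/-!
A finite-index normal subgroup `Γ` of `H(r)` meets the three coordinate levels of `H(r)` in
nonzero subgroups of `ℤ`: the `a`-coordinates of `Γ`, the `b`-coordinates of `Γ ∩ {a = 0}`, and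
the exponents `k` with `δ₃ ^ k ∈ Γ`. Elements `x₁, x₂ ∈ Γ` and `δ₃ ^ c` realising their positive
generators `p, s, c` generate `Γ`, every element being `x₁ ^ m * x₂ ^ n * δ₃ ^ (c * j)`.
Normality puts the commutators `⁅x, δᵢ⁆`, which are powers `δ₃ ^ (± r * coordinate)`, into `Γ`,
so `c` divides `r` times every `a`- and `b`-coordinate of `x₁, x₂`. Hence
`⁅x₁, x₂⁆ = (δ₃ ^ c) ^ (r * p * s / c)`: the triple satisfies the defining relations of
`H(r * p * s / c)`, whose induced homomorphism onto `Γ` is injective by comparing coordinates.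
Finally, the image of the abelian normal subgroup `{a = 0}` in `H(r) ⧸ Γ` has index
`(ker a ⊔ Γ).index`, at most `p` because `x₁` has `a`-coordinate `p`.
-/

open scoped commutatorElement

theorem Int.exists_forall_ofAdd_mem_iff_dvd (S : Subgroup (Multiplicative ℤ)) :
    ∃ g : ℕ, ∀ n : ℤ, Multiplicative.ofAdd n ∈ S ↔ (g : ℤ) ∣ n := by
  obtain ⟨g, hg⟩ := Int.subgroup_cyclic (Subgroup.toAddSubgroup' S)
  refine ⟨g.natAbs, fun n => ?_⟩
  rw [Int.natCast_dvd, Int.natAbs_dvd_natAbs, ← Int.mem_zmultiples_iff,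
    AddSubgroup.zmultiples_eq_closure, ← hg]
  rfl

theorem Nat.dvd_mul_gcd_of_dvd_mul {c k m n : ℕ} (hm : c ∣ k * m) (hn : c ∣ k * n) :
    c ∣ k * m.gcd n :=
  Nat.gcd_mul_left k m n ▸ Nat.dvd_gcd hm hn

theorem Int.natCast_dvd_mul_gcd {c k : ℕ} {a b : ℤ} (ha : (c : ℤ) ∣ k * a) (hb : (c : ℤ) ∣ k * b) :
    c ∣ k * Int.gcd a b := by
  rw [Int.natCast_dvd, Int.natAbs_mul, Int.natAbs_natCast] at ha hb
  exact Nat.dvd_mul_gcd_of_dvd_mul ha hb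

section

variable {G : Type*} [Group G] {x y z : G}

theorem zpow_mul_zpow_of_mul_eq (hxz : Commute x z) (hyz : Commute y z) {k : ℤ}
    (h : y * x = x * y * z ^ k) (m n : ℤ) : y ^ n * x ^ m = x ^ m * y ^ n * z ^ (k * m * n) := by
  have hy : SemiconjBy x (y * z ^ k) y := by rw [SemiconjBy, h, mul_assoc]
  have hyn : SemiconjBy (y ^ n) x (x * z ^ (k * n)) := by
    have := hy.zpow_right n
    rw [(hyz.zpow_right k).mul_zpow, ← zpow_mul] at this
    rw [SemiconjBy, ← this, mul_assoc, ((hyz.zpow_right _).zpow_left n).eq]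
  rw [(hyn.zpow_right m).eq, (hxz.zpow_right _).mul_zpow, ← zpow_mul, mul_assoc,
    ← ((hyz.zpow_right _).zpow_left n).eq, ← mul_assoc, mul_right_comm k]

theorem zpow_mul_zpow_mul_zpow_mem_closure (x y z : G) (a b c : ℤ) :
    x ^ a * y ^ b * z ^ c ∈ Subgroup.closure {x, y, z} :=
  mul_mem (mul_mem (zpow_mem (Subgroup.subset_closure (by simp)) a)
    (zpow_mem (Subgroup.subset_closure (by simp)) b)) (zpow_mem (Subgroup.subset_closure (by simp)) c)

end

namespace Heis

variable {r : ℕ}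

def aHom : Heis r →* Multiplicative ℤ where
  toFun x := .ofAdd x.a
  map_one' := rfl
  map_mul' _ _ := rfl

def bHom : Heis r →* Multiplicative ℤ where
  toFun x := .ofAdd x.b
  map_one' := rfl
  map_mul' _ _ := rfl

@[simp] lemma aHom_apply (x : Heis r) : aHom x = .ofAdd x.a := rfl

@[simp] lemma bHom_apply (x : Heis r) : bHom x = .ofAdd x.b := rfl

@[simp] lemma mem_ker_aHom {x : Heis r} : x ∈ (aHom : Heis r →* _).ker ↔ x.a = 0 :=
  MonoidHom.mem_ker

@[simp] lemma zpow_a (x : Heis r) (m : ℤ) : (x ^ m).a = m * x.a :=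
  congrArg Multiplicative.toAdd (map_zpow aHom x m)

@[simp] lemma zpow_b (x : Heis r) (m : ℤ) : (x ^ m).b = m * x.b :=
  congrArg Multiplicative.toAdd (map_zpow bHom x m)

lemma zpow_of_a_mul_b_eq_zero {x : Heis r} (hx : x.a * x.b = 0) (m : ℤ) :
    x ^ m = ⟨m * x.a, m * x.b, m * x.c⟩ := by
  induction m using Int.induction_on with
  | zero => ext <;> simp
  | succ n ih =>
    rw [zpow_add_one, ih]
    ext <;> simp only [mul_a, mul_b, mul_c]
    · ring
    · ring
    · linear_combination (r * n : ℤ) * hx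
  | pred n ih =>
    rw [zpow_sub_one, ih]
    ext <;> simp only [mul_a, mul_b, mul_c, inv_a, inv_b, inv_c]
    · ring
    · ring
    · linear_combination (r * (n + 1) : ℤ) * hx

@[simp] lemma mk_zero_zero_zpow (v m : ℤ) : (⟨0, 0, v⟩ : Heis r) ^ m = ⟨0, 0, m * v⟩ := by
  rw [zpow_of_a_mul_b_eq_zero] <;> simp

@[simp] lemma δ₁_zpow (m : ℤ) : (δ₁ : Heis r) ^ m = ⟨m, 0, 0⟩ := by
  rw [zpow_of_a_mul_b_eq_zero] <;> simp [δ₁]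

@[simp] lemma δ₂_zpow (m : ℤ) : (δ₂ : Heis r) ^ m = ⟨0, m, 0⟩ := by
  rw [zpow_of_a_mul_b_eq_zero] <;> simp [δ₂]

@[simp] lemma δ₃_zpow (m : ℤ) : (δ₃ : Heis r) ^ m = ⟨0, 0, m⟩ := by
  rw [zpow_of_a_mul_b_eq_zero] <;> simp [δ₃]

@[simp] lemma δ₃_pow (n : ℕ) : (δ₃ : Heis r) ^ n = ⟨0, 0, n⟩ := by
  rw [← zpow_natCast, δ₃_zpow]

lemma δ₁_zpow_mul_δ₂_zpow_mul_δ₃_zpow (x : Heis r) :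
    δ₁ ^ x.a * δ₂ ^ x.b * δ₃ ^ (x.c - r * x.a * x.b) = x := by
  ext <;> simp

lemma commute_δ₃ (x : Heis r) : Commute x δ₃ := by
  ext <;> simp [δ₃, add_comm]

lemma commutatorElement_eq (x y : Heis r) : ⁅x, y⁆ = δ₃ ^ (r * (x.a * y.b - x.b * y.a)) := by
  ext <;> simp only [commutatorElement_def, δ₃_zpow, mul_a, mul_b, mul_c, inv_a, inv_b, inv_c] <;>
    ring

lemma commute_of_a_eq_zero {x y : Heis r} (hx : x.a = 0) (hy : y.a = 0) : Commute x y := by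
  ext <;> simp [hx, hy, add_comm]

lemma index_ker_aHom_sup_le {Γ : Subgroup (Heis r)} {x : Heis r} (hx : x ∈ Γ) (hx0 : x.a ≠ 0) :
    (aHom.ker ⊔ Γ).index ≤ x.a.natAbs := by
  have : NeZero x.a.natAbs := ⟨Int.natAbs_ne_zero.mpr hx0⟩
  let ψ : Heis r →* Multiplicative (ZMod x.a.natAbs) :=
    (AddMonoidHom.toMultiplicative (Int.castAddHom _)).comp aHom
  have hker : ψ.ker ≤ aHom.ker ⊔ Γ := by
    intro g hg
    obtain ⟨m, hm⟩ : x.a ∣ g.a := by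
      rw [← Int.natAbs_dvd, ← ZMod.intCast_zmod_eq_zero_iff_dvd]
      exact hg
    have hm : (x ^ m)⁻¹ * g ∈ aHom.ker := by simp [hm, mul_comm]
    simpa using mul_mem (Subgroup.mem_sup_right (zpow_mem hx m)) (Subgroup.mem_sup_left hm)
  calc (aHom.ker ⊔ Γ).index
      ≤ ψ.ker.index := Subgroup.index_antitone hker
    _ = Nat.card ψ.range := Subgroup.index_ker ψ
    _ ≤ Nat.card (ZMod x.a.natAbs) := Subgroup.card_le_card_group _
    _ = x.a.natAbs := Nat.card_zmod _

lemma exists_normal_commute_index_le {Γ : Subgroup (Heis r)} [Γ.Normal] {x : Heis r} (hx : x ∈ Γ)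
    (hx0 : x.a ≠ 0) : ∃ A : Subgroup (Heis r ⧸ Γ), A.Normal ∧ (∀ g h : A, g * h = h * g) ∧
      A.index ≤ x.a.natAbs := by
  refine ⟨aHom.ker.map (QuotientGroup.mk' Γ), Subgroup.Normal.map inferInstance _
    (QuotientGroup.mk'_surjective Γ), ?_, ?_⟩
  · rintro ⟨_, g, hg, rfl⟩ ⟨_, h, hh, rfl⟩
    ext
    exact congrArg (QuotientGroup.mk' Γ) (commute_of_a_eq_zero (mem_ker_aHom.1 hg)
      (mem_ker_aHom.1 hh)).eq
  · rw [Subgroup.index_map, QuotientGroup.ker_mk', MonoidHom.range_eq_top_of_surjective _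
      (QuotientGroup.mk'_surjective Γ), Subgroup.index_top, mul_one]
    exact index_ker_aHom_sup_le hx hx0

section

variable {G : Type*} [Group G]

def lift (x y z : G) (hxz : Commute x z) (hyz : Commute y z) (hxy : ⁅x, y⁆ = z ^ (r : ℤ)) :
    Heis r →* G where
  toFun g := x ^ g.a * y ^ g.b * z ^ (g.c - r * g.a * g.b)
  map_one' := by simp
  map_mul' g h := by
    have hyx : y * x = x * y * z ^ (-(r : ℤ)) := by
      rw [commutatorElement_def, mul_inv_eq_iff_eq_mul, mul_inv_eq_iff_eq_mul] at hxy
      rw [hxy, mul_assoc (z ^ _) y x, ← ((hyz.mul_left hxz).zpow_right _).eq, zpow_neg,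
        mul_inv_cancel_right]
    set E := -r * h.a * g.b
    set C := g.c - r * g.a * g.b
    set C' := h.c - r * h.a * h.b
    calc x ^ (g * h).a * y ^ (g * h).b * z ^ ((g * h).c - r * (g * h).a * (g * h).b)
        = x ^ g.a * x ^ h.a * (y ^ g.b * y ^ h.b) * (z ^ E * z ^ C * z ^ C') := by
          simp only [mul_a, mul_b, mul_c, ← zpow_add, E, C, C']
          congr 2
          ring
      _ = x ^ g.a * (x ^ h.a * y ^ g.b * z ^ E) * y ^ h.b * (z ^ C * z ^ C') := by
          simp only [mul_assoc]
          rw [(hyz.zpow_zpow h.b E).left_comm]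
      _ = x ^ g.a * (y ^ g.b * x ^ h.a) * y ^ h.b * (z ^ C * z ^ C') := by
          rw [zpow_mul_zpow_of_mul_eq hxz hyz hyx]
      _ = x ^ g.a * y ^ g.b * z ^ C * (x ^ h.a * y ^ h.b * z ^ C') := by
          simp only [mul_assoc]
          rw [(hxz.zpow_zpow h.a C).symm.left_comm, (hyz.zpow_zpow h.b C).symm.left_comm]

@[simp] lemma lift_apply {x y z : G} {hxz : Commute x z} {hyz : Commute y z}
    {hxy : ⁅x, y⁆ = z ^ (r : ℤ)} (g : Heis r) :
    lift x y z hxz hyz hxy g = x ^ g.a * y ^ g.b * z ^ (g.c - r * g.a * g.b) := rfl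

lemma range_lift {x y z : G} {hxz : Commute x z} {hyz : Commute y z}
    {hxy : ⁅x, y⁆ = z ^ (r : ℤ)} : (lift x y z hxz hyz hxy).range = Subgroup.closure {x, y, z} := by
  apply le_antisymm
  · rintro _ ⟨g, rfl⟩
    exact zpow_mul_zpow_mul_zpow_mem_closure x y z _ _ _
  · rw [Subgroup.closure_le]
    rintro _ (rfl | rfl | rfl)
    · exact ⟨⟨1, 0, 0⟩, by simp⟩
    · exact ⟨⟨0, 1, 0⟩, by simp⟩
    · exact ⟨⟨0, 0, 1⟩, by simp⟩

end

structure AdaptedBasis (Γ : Subgroup (Heis r)) where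
  x₁ : Heis r
  x₂ : Heis r
  c : ℕ
  x₁_mem : x₁ ∈ Γ
  x₂_mem : x₂ ∈ Γ
  x₁_a_pos : 0 < x₁.a
  x₂_a : x₂.a = 0
  x₂_b_pos : 0 < x₂.b
  c_pos : 0 < c
  x₁_a_dvd : ∀ x ∈ Γ, x₁.a ∣ x.a
  x₂_b_dvd : ∀ x ∈ Γ, x.a = 0 → x₂.b ∣ x.b
  δ₃_zpow_mem_iff : ∀ k : ℤ, δ₃ ^ k ∈ Γ ↔ (c : ℤ) ∣ k

theorem exists_adaptedBasis (Γ : Subgroup (Heis r)) [Γ.Normal] [Γ.FiniteIndex] :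
    Nonempty (AdaptedBasis Γ) := by
  obtain ⟨p, hp⟩ := Int.exists_forall_ofAdd_mem_iff_dvd (Γ.map aHom)
  obtain ⟨s, hs⟩ := Int.exists_forall_ofAdd_mem_iff_dvd ((Γ ⊓ aHom.ker).map bHom)
  obtain ⟨c, hc⟩ := Int.exists_forall_ofAdd_mem_iff_dvd (Γ.comap (zpowersHom _ δ₃))
  simp only [Subgroup.mem_map, Subgroup.mem_inf, Subgroup.mem_comap, mem_ker_aHom, aHom_apply,
    bHom_apply, EmbeddingLike.apply_eq_iff_eq, zpowersHom_apply, toAdd_ofAdd] at hp hs hc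
  have hN : (Γ.index : ℤ) ≠ 0 := Nat.cast_ne_zero.mpr Subgroup.FiniteIndex.index_ne_zero
  have hpow (g : Heis r) : g ^ (Γ.index : ℤ) ∈ Γ := by
    rw [zpow_natCast]
    exact Γ.pow_index_mem g
  have h₁ := hpow δ₁
  have h₂ := hpow δ₂
  rw [δ₁_zpow] at h₁
  rw [δ₂_zpow] at h₂
  have hp0 : p ≠ 0 := by
    rintro rfl
    exact hN (zero_dvd_iff.mp ((hp _).1 ⟨_, h₁, rfl⟩))
  have hs0 : s ≠ 0 := by
    rintro rfl
    exact hN (zero_dvd_iff.mp ((hs _).1 ⟨_, ⟨h₂, rfl⟩, rfl⟩))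
  have hc0 : c ≠ 0 := by
    rintro rfl
    exact hN (zero_dvd_iff.mp ((hc _).1 (hpow δ₃)))
  obtain ⟨x₁, hx₁, hx₁a⟩ := (hp p).2 dvd_rfl
  obtain ⟨x₂, ⟨hx₂, hx₂a⟩, hx₂b⟩ := (hs s).2 dvd_rfl
  exact ⟨{
    x₁ := x₁
    x₂ := x₂
    c := c
    x₁_mem := hx₁
    x₂_mem := hx₂
    x₁_a_pos := by omega
    x₂_a := hx₂a
    x₂_b_pos := by omega
    c_pos := by omega
    x₁_a_dvd := fun x hx => hx₁a ▸ (hp x.a).1 ⟨x, hx, rfl⟩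
    x₂_b_dvd := fun x hx hxa => hx₂b ▸ (hs x.b).1 ⟨x, ⟨hx, hxa⟩, rfl⟩
    δ₃_zpow_mem_iff := hc }⟩

end Heis

namespace Heis.AdaptedBasis

variable {r : ℕ} {Γ : Subgroup (Heis r)} (B : AdaptedBasis Γ)

lemma δ₃_zpow_c_mem : δ₃ ^ (B.c : ℤ) ∈ Γ := (B.δ₃_zpow_mem_iff _).2 dvd_rfl

lemma exists_zpow_mul_zpow_mul_zpow_eq {x : Heis r} (hx : x ∈ Γ) :
    ∃ m n j : ℤ, B.x₁ ^ m * B.x₂ ^ n * (δ₃ ^ (B.c : ℤ)) ^ j = x := by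
  obtain ⟨m, hm⟩ := B.x₁_a_dvd x hx
  set y := (B.x₁ ^ m)⁻¹ * x
  have hy : y ∈ Γ := mul_mem (inv_mem (zpow_mem B.x₁_mem m)) hx
  have hya : y.a = 0 := by simp [y, hm, mul_comm]
  obtain ⟨n, hn⟩ := B.x₂_b_dvd y hy hya
  set w := (B.x₂ ^ n)⁻¹ * y
  have hw : δ₃ ^ w.c = w := by ext <;> simp [w, hya, hn, B.x₂_a, mul_comm]
  obtain ⟨j, hj⟩ := (B.δ₃_zpow_mem_iff w.c).1 <| by
    rw [hw]
    exact mul_mem (inv_mem (zpow_mem B.x₂_mem n)) hy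
  refine ⟨m, n, j, ?_⟩
  rw [← zpow_mul, ← hj, hw]
  simp only [w, y]
  group

lemma closure_eq : Γ = Subgroup.closure {B.x₁, B.x₂, δ₃ ^ (B.c : ℤ)} := by
  apply le_antisymm
  · intro x hx
    obtain ⟨m, n, j, rfl⟩ := B.exists_zpow_mul_zpow_mul_zpow_eq hx
    exact zpow_mul_zpow_mul_zpow_mem_closure _ _ _ m n j
  · rw [Subgroup.closure_le, Set.insert_subset_iff, Set.insert_subset_iff,
      Set.singleton_subset_iff]
    exact ⟨B.x₁_mem, B.x₂_mem, B.δ₃_zpow_c_mem⟩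

variable [Γ.Normal]

lemma c_dvd_commutator {x : Heis r} (hx : x ∈ Γ) (y : Heis r) :
    (B.c : ℤ) ∣ r * (x.a * y.b - x.b * y.a) := by
  rw [← B.δ₃_zpow_mem_iff, ← commutatorElement_eq]
  exact Subgroup.commutator_le_left Γ ⊤ (Subgroup.commutator_mem_commutator hx (Subgroup.mem_top y))

lemma c_dvd_mul_a {x : Heis r} (hx : x ∈ Γ) : (B.c : ℤ) ∣ r * x.a := by
  simpa [δ₂] using B.c_dvd_commutator hx δ₂

lemma c_dvd_mul_b {x : Heis r} (hx : x ∈ Γ) : (B.c : ℤ) ∣ r * x.b := by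
  simpa [δ₁] using B.c_dvd_commutator hx δ₁

def commutatorExponent : ℕ := r * (B.x₁.a * B.x₂.b).natAbs / B.c

lemma c_mul_commutatorExponent : (B.c : ℤ) * B.commutatorExponent = r * (B.x₁.a * B.x₂.b) := by
  have hdvd : B.c ∣ r * (B.x₁.a * B.x₂.b).natAbs := by
    simpa [← mul_assoc, Int.natCast_dvd, Int.natAbs_mul] using
      (B.c_dvd_mul_a B.x₁_mem).mul_right B.x₂.b
  have hpos : 0 ≤ B.x₁.a * B.x₂.b := (mul_pos B.x₁_a_pos B.x₂_b_pos).le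
  rw [commutatorExponent, ← Nat.cast_mul, Nat.mul_div_cancel' hdvd]
  push_cast
  rw [abs_of_nonneg hpos]

lemma commutatorElement_x₁_x₂ :
    ⁅B.x₁, B.x₂⁆ = (δ₃ ^ (B.c : ℤ)) ^ (B.commutatorExponent : ℤ) := by
  rw [commutatorElement_eq, ← zpow_mul, B.c_mul_commutatorExponent, B.x₂_a]
  ring_nf

def lift : Heis B.commutatorExponent →* Heis r :=
  Heis.lift B.x₁ B.x₂ (δ₃ ^ (B.c : ℤ)) ((commute_δ₃ _).zpow_right _)
    ((commute_δ₃ _).zpow_right _) B.commutatorElement_x₁_x₂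

lemma injective_lift : Function.Injective B.lift := by
  refine (injective_iff_map_eq_one _).2 fun g hg => ?_
  have ha : g.a = 0 := by simpa [lift, B.x₂_a, B.x₁_a_pos.ne'] using congrArg Heis.a hg
  have hb : g.b = 0 := by simpa [lift, ha, B.x₂_b_pos.ne'] using congrArg Heis.b hg
  have hc : g.c = 0 := by simpa [lift, ha, hb, B.c_pos.ne'] using congrArg Heis.c hg
  exact Heis.ext ha hb hc

lemma range_lift : B.lift.range = Γ := by
  rw [lift, Heis.range_lift, ← B.closure_eq]

noncomputable def mulEquiv : Heis B.commutatorExponent ≃* Γ :=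
  (MonoidHom.ofInjective B.injective_lift).trans (MulEquiv.subgroupCongr B.range_lift)

end Heis.AdaptedBasis

theorem stmt_13_general (r : ℕ) (Γ₀ : Subgroup (Heis r)) [Γ₀.Normal]
    (hfi : Γ₀.FiniteIndex) :
    ∃ (a₁ a₂ a₃ b₁ b₂ b₃ : ℤ) (c : ℕ),
      a₁ * b₂ - a₂ * b₁ ≠ 0 ∧ 0 < c ∧
      Γ₀ = Subgroup.closure
        {Heis.δ₁ ^ a₁ * Heis.δ₂ ^ a₂ * Heis.δ₃ ^ a₃,
         Heis.δ₁ ^ b₁ * Heis.δ₂ ^ b₂ * Heis.δ₃ ^ b₃,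
         Heis.δ₃ ^ (c : ℤ)} ∧
      c ∣ r * Nat.gcd (Int.gcd a₁ a₂) (Int.gcd b₁ b₂) ∧
      Nonempty (Γ₀ ≃* Heis (r * (a₁ * b₂ - a₂ * b₁).natAbs / c)) ∧
      ∃ A : Subgroup (Heis r ⧸ Γ₀), A.Normal ∧ (∀ x y : A, x * y = y * x) ∧
        A.index ≤ Int.gcd a₁ b₁ := by
  obtain ⟨B⟩ := Heis.exists_adaptedBasis Γ₀
  refine ⟨B.x₁.a, B.x₁.b, B.x₁.c - r * B.x₁.a * B.x₁.b, B.x₂.a, B.x₂.b,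
    B.x₂.c - r * B.x₂.a * B.x₂.b, B.c, ?_, B.c_pos, ?_, ?_, ?_, ?_⟩
  · simp [B.x₂_a, B.x₁_a_pos.ne', B.x₂_b_pos.ne']
  · simpa only [Heis.δ₁_zpow_mul_δ₂_zpow_mul_δ₃_zpow] using B.closure_eq
  · exact Nat.dvd_mul_gcd_of_dvd_mul
      (Int.natCast_dvd_mul_gcd (B.c_dvd_mul_a B.x₁_mem) (B.c_dvd_mul_b B.x₁_mem))
      (Int.natCast_dvd_mul_gcd (B.c_dvd_mul_a B.x₂_mem) (B.c_dvd_mul_b B.x₂_mem))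
  · rw [B.x₂_a, mul_zero, sub_zero]
    exact ⟨B.mulEquiv.symm⟩
  · rw [B.x₂_a, Int.gcd_zero_right]
    exact Heis.exists_normal_commute_index_le B.x₁_mem B.x₁_a_pos.ne'

/-- Lemma A.7: let Γ₀ be a normal subgroup of finite index in H(r) and
G₀ = H(r)/Γ₀. Then there are integers a₁, a₂, a₃, b₁, b₂, b₃ with
a₁b₂ − a₂b₁ ≠ 0 and an integer c > 0 such that Γ₀ is generated by
δ₁^{a₁}δ₂^{a₂}δ₃^{a₃}, δ₁^{b₁}δ₂^{b₂}δ₃^{b₃} and δ₃^c; moreover c divides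
r·gcd(a₁,a₂,b₁,b₂), Γ₀ ≅ H(r·|a₁b₂ − a₂b₁|/c), and G₀ contains a normal abelian
subgroup of index at most gcd(a₁,b₁). -/
theorem stmt_13 (r : ℕ) (hr : 0 < r) (Γ₀ : Subgroup (Heis r)) [Γ₀.Normal]
    (hfi : Γ₀.FiniteIndex) :
    ∃ (a₁ a₂ a₃ b₁ b₂ b₃ : ℤ) (c : ℕ),
      a₁ * b₂ - a₂ * b₁ ≠ 0 ∧ 0 < c ∧
      Γ₀ = Subgroup.closure
        {Heis.δ₁ ^ a₁ * Heis.δ₂ ^ a₂ * Heis.δ₃ ^ a₃,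
         Heis.δ₁ ^ b₁ * Heis.δ₂ ^ b₂ * Heis.δ₃ ^ b₃,
         Heis.δ₃ ^ (c : ℤ)} ∧
      c ∣ r * Nat.gcd (Int.gcd a₁ a₂) (Int.gcd b₁ b₂) ∧
      Nonempty (Γ₀ ≃* Heis (r * (a₁ * b₂ - a₂ * b₁).natAbs / c)) ∧
      ∃ A : Subgroup (Heis r ⧸ Γ₀), A.Normal ∧ (∀ x y : A, x * y = y * x) ∧
        A.index ≤ Int.gcd a₁ b₁ :=
  stmt_13_general r Γ₀ hfi
end
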